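/- arXiv:2511.15596 — 6 statements merged into one kernel-verified Lean document; each statement's English description precedes it below -/
import Mathlib

section
/- Let (X₁, ρ₁) and (X₂, ρ₂) be compact metric spaces and let f : X₁ → P(X₂) be a map into Borel probability measures on X₂ that is continuous for the topology of weak convergence and satisfies W₁(f(x), f(y)) ≤ ρ₁(x, y) for all x, y ∈ X₁. Define F : P(X₁) → P(X₂) by F(μ) = μ.bind f, i.e. F(μ)(A) = ∫_{X₁} f(x)(A) dμ(x). Then F(δ_x) = f(x) for every x ∈ X₁, F preserves finite convex combinations (F(∑ᵢ λᵢ μᵢ) = ∑ᵢ λᵢ F(μᵢ) whenever λᵢ ≥ 0 and ∑ᵢ λᵢ = 1), and F is 1-Lipschitz: W₁(F(μ), F(ν)) ≤ W₁(μ, ν) for all Borel probability measures μ, ν on X₁. -/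
open MeasureTheory
open Filter BoundedContinuousFunction
open scoped BigOperators NNReal ENNReal Topology ProbabilityTheory

/-- The dual (Kantorovich--Rubinstein) 1-Wasserstein distance between two Borel measures:
the supremum over 1-Lipschitz functions `f : X → ℝ` of `|∫ f dμ - ∫ f dν|`. -/
noncomputable def dualW1 {X : Type*} [MetricSpace X] [MeasurableSpace X]
    (μ ν : Measure X) : ℝ :=
  sSup {r : ℝ | ∃ f : X → ℝ, LipschitzWith 1 f ∧ r = |∫ x, f x ∂μ - ∫ x, f x ∂ν|}


lemma lintegral_bcf_cont {X : Type*} [MetricSpace X] [MeasurableSpace X] [BorelSpace X]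
    (g : BoundedContinuousFunction X ℝ≥0) :
    Continuous (fun μ : ProbabilityMeasure X => ∫⁻ x, (g x : ℝ≥0∞) ∂(μ : Measure X)) := by
  have h : (fun μ : ProbabilityMeasure X => ∫⁻ x, (g x : ℝ≥0∞) ∂(μ : Measure X))
      = fun μ => ((μ.toFiniteMeasure.testAgainstNN g : ℝ≥0) : ℝ≥0∞) := by
    funext μ
    rw [FiniteMeasure.testAgainstNN_coe_eq]
    rfl
  rw [h]
  exact ENNReal.continuous_coe.comp (ProbabilityMeasure.continuous_testAgainstNN_eval g)

lemma measurable_kernel_of_continuous {X₁ X₂ : Type*} [TopologicalSpace X₁] [MeasurableSpace X₁]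
    [OpensMeasurableSpace X₁] [MetricSpace X₂] [MeasurableSpace X₂] [BorelSpace X₂]
    (f : X₁ → ProbabilityMeasure X₂) (hf : Continuous f) :
    Measurable fun x => (f x : Measure X₂) := by
  apply Measure.measurable_of_measurable_coe
  have key : ∀ F : Set X₂, IsClosed F → Measurable fun x => (f x : Measure X₂) F := by
    intro F hF
    have δpos : ∀ n : ℕ, (0:ℝ) < 1 / (n + 1) := fun n => by positivity
    have δlim : Tendsto (fun n : ℕ => 1 / ((n:ℝ) + 1)) atTop (𝓝 0) :=
      tendsto_one_div_add_atTop_nhds_zero_nat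
    apply ENNReal.measurable_of_tendsto
      (f := fun n x => ∫⁻ ω, (thickenedIndicator (δpos n) F ω : ℝ≥0∞) ∂(f x : Measure X₂))
    · intro n
      exact ((lintegral_bcf_cont (thickenedIndicator (δpos n) F)).comp hf).measurable
    · rw [tendsto_pi_nhds]
      intro x
      exact tendsto_lintegral_thickenedIndicator_of_isClosed (f x : Measure X₂) hF δpos δlim
  intro s hs
  have h_eq : ‹MeasurableSpace X₂› = MeasurableSpace.generateFrom {s : Set X₂ | IsClosed s} := by
    rw [BorelSpace.measurable_eq (α := X₂), borel_eq_generateFrom_isClosed]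
  refine MeasurableSpace.induction_on_inter
    (C := fun s _ => Measurable fun x => (f x : Measure X₂) s) h_eq isPiSystem_isClosed
    ?_ ?_ ?_ ?_ s hs
  · simp only [measure_empty]; exact measurable_const
  · exact fun t ht => key t ht
  · intro t htm hC
    have h : ∀ x, (f x : Measure X₂) tᶜ = 1 - (f x : Measure X₂) t := fun x => by
      rw [measure_compl htm (measure_ne_top _ _), measure_univ]
    simp_rw [h]
    exact Measurable.const_sub hC 1
  · intro g hdisj hgm hC
    simp_rw [measure_iUnion hdisj hgm]
    exact Measurable.ennreal_tsum hC


lemma bddAbove_dualW1_aux {X : Type*} [MetricSpace X] [CompactSpace X] [MeasurableSpace X]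
    [BorelSpace X] (μ ν : Measure X) (hμ : IsProbabilityMeasure μ) (hν : IsProbabilityMeasure ν) :
    BddAbove {r : ℝ | ∃ f : X → ℝ, LipschitzWith 1 f ∧ r = |∫ x, f x ∂μ - ∫ x, f x ∂ν|} := by
  have hX : Nonempty X := by
    by_contra h
    rw [not_nonempty_iff] at h
    have h1 := hμ.measure_univ
    rw [Set.univ_eq_empty_iff.mpr h, measure_empty] at h1
    exact zero_ne_one h1
  obtain ⟨x₀⟩ := hX
  refine ⟨2 * Metric.diam (Set.univ : Set X), ?_⟩
  rintro r ⟨g, hg, rfl⟩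
  have hgc : Continuous g := hg.continuous
  have key : ∀ (m : Measure X), IsProbabilityMeasure m →
      |∫ x, g x ∂m - g x₀| ≤ Metric.diam (Set.univ : Set X) := by
    intro m hm
    have hint : Integrable g m := (BoundedContinuousFunction.mkOfCompact ⟨g, hgc⟩).integrable m
    have h1 : ∫ x, g x ∂m - g x₀ = ∫ x, (g x - g x₀) ∂m := by
      rw [integral_sub hint (integrable_const _), integral_const, probReal_univ]; simp
    rw [h1]
    have habs : Integrable (fun x => |g x - g x₀|) m := (hint.sub (integrable_const _)).abs
    calc |∫ x, (g x - g x₀) ∂m| ≤ ∫ x, |g x - g x₀| ∂m := by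
          simpa [Real.norm_eq_abs] using
            norm_integral_le_integral_norm (μ := m) (fun x => g x - g x₀)
      _ ≤ ∫ _x, Metric.diam (Set.univ : Set X) ∂m := by
          refine integral_mono habs (integrable_const _) fun x => ?_
          have hred := hg.dist_le_mul x x₀
          simp only [NNReal.coe_one, one_mul] at hred
          calc |g x - g x₀| = dist (g x) (g x₀) := (Real.dist_eq _ _).symm
            _ ≤ dist x x₀ := hred
            _ ≤ Metric.diam (Set.univ : Set X) :=
                Metric.dist_le_diam_of_mem isCompact_univ.isBounded trivial trivial
      _ = Metric.diam (Set.univ : Set X) := by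
          rw [integral_const, probReal_univ]; simp
  calc |∫ x, g x ∂μ - ∫ x, g x ∂ν|
      = |(∫ x, g x ∂μ - g x₀) - (∫ x, g x ∂ν - g x₀)| := by ring_nf
    _ ≤ |∫ x, g x ∂μ - g x₀| + |∫ x, g x ∂ν - g x₀| := abs_sub _ _
    _ ≤ Metric.diam (Set.univ : Set X) + Metric.diam (Set.univ : Set X) :=
        add_le_add (key μ hμ) (key ν hν)
    _ = 2 * Metric.diam (Set.univ : Set X) := by ring

lemma zero_mem_dualW1_aux {X : Type*} [MetricSpace X] [MeasurableSpace X] (μ ν : Measure X) :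
    (0:ℝ) ∈ {r : ℝ | ∃ f : X → ℝ, LipschitzWith 1 f ∧ r = |∫ x, f x ∂μ - ∫ x, f x ∂ν|} :=
  ⟨fun _ => 0, (LipschitzWith.const 0).weaken zero_le_one, by simp⟩


/-- If `f : X₁ → P(X₂)` is weak-continuous and 1-Lipschitz for the dual
1-Wasserstein distance, then `F(μ) = μ.bind f` satisfies `F(δ_x) = f x`, preserves finite
convex combinations, and is 1-Lipschitz for the dual 1-Wasserstein distance. -/
theorem bind_of_lipschitz_kernel {X₁ X₂ : Type*}
    [MetricSpace X₁] [CompactSpace X₁] [MeasurableSpace X₁] [BorelSpace X₁]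
    [MetricSpace X₂] [CompactSpace X₂] [MeasurableSpace X₂] [BorelSpace X₂]
    (f : X₁ → ProbabilityMeasure X₂)
    (hf_cont : Continuous f)
    (hf_lip : ∀ x y : X₁, dualW1 (f x : Measure X₂) (f y : Measure X₂) ≤ dist x y) :
    (∀ x : X₁,
      (Measure.dirac x).bind (fun z => (f z : Measure X₂)) = (f x : Measure X₂)) ∧
    (∀ (n : ℕ) (lam : Fin n → ℝ≥0) (μs : Fin n → Measure X₁),
      (∀ i, IsProbabilityMeasure (μs i)) → (∑ i, lam i = 1) →
      (∑ i, (lam i : ℝ≥0∞) • μs i).bind (fun z => (f z : Measure X₂)) =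
        ∑ i, (lam i : ℝ≥0∞) • ((μs i).bind (fun z => (f z : Measure X₂)))) ∧
    (∀ μ ν : Measure X₁, IsProbabilityMeasure μ → IsProbabilityMeasure ν →
      dualW1 (μ.bind (fun z => (f z : Measure X₂)))
          (ν.bind (fun z => (f z : Measure X₂))) ≤ dualW1 μ ν) := by
  have hmeas : Measurable fun z => (f z : Measure X₂) :=
    measurable_kernel_of_continuous f hf_cont
  refine ⟨fun x => Measure.dirac_bind hmeas x, ?_, ?_⟩
  · intro n lam μs _ _
    ext s hs
    simp only [Measure.bind_apply hs hmeas.aemeasurable, lintegral_finset_sum_measure,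
      lintegral_smul_measure, Measure.coe_finset_sum, Finset.sum_apply, Measure.smul_apply,
      smul_eq_mul]
  · intro μ ν hμ hν
    haveI := hμ; haveI := hν
    -- the kernel
    set κ : ProbabilityTheory.Kernel X₁ X₂ := ⟨fun x => (f x : Measure X₂), hmeas⟩ with hκ
    haveI : ProbabilityTheory.IsMarkovKernel κ := ⟨fun x => (f x).prop⟩
    have hκ_app : ∀ x, κ x = (f x : Measure X₂) := fun x => rfl
    have hbind : ∀ (m : Measure X₁), SFinite m →
        m.bind (fun z => (f z : Measure X₂)) = (m ⊗ₘ κ).snd := by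
      intro m _
      ext s hs
      rw [Measure.bind_apply hs hmeas.aemeasurable, Measure.snd_apply hs,
        Measure.compProd_apply (measurable_snd hs)]
      rfl
    have hprob : ∀ (m : Measure X₁), IsProbabilityMeasure m →
        IsProbabilityMeasure (m.bind (fun z => (f z : Measure X₂))) := by
      intro m hm
      haveI := hm
      constructor
      rw [Measure.bind_apply MeasurableSet.univ hmeas.aemeasurable]
      simp [measure_univ]
    have hint_eq : ∀ (m : Measure X₁), IsProbabilityMeasure m → ∀ (g : X₂ → ℝ), Continuous g →
        ∫ y, g y ∂(m.bind fun z => (f z : Measure X₂))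
          = ∫ x, ∫ y, g y ∂(f x : Measure X₂) ∂m := by
      intro m hm g hg
      haveI := hm
      rw [hbind m inferInstance, Measure.snd,
        integral_map measurable_snd.aemeasurable hg.aestronglyMeasurable]
      have hintg : Integrable (fun p : X₁ × X₂ => g p.2) (m ⊗ₘ κ) :=
        (BoundedContinuousFunction.mkOfCompact ⟨fun p : X₁ × X₂ => g p.2,
          hg.comp continuous_snd⟩).integrable _
      rw [Measure.integral_compProd hintg]
      rfl
    have hFμ := hprob μ inferInstance
    have hFν := hprob ν inferInstance
    apply Real.sSup_le
    · rintro r ⟨g, hg, rfl⟩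
      have h1 := hint_eq μ inferInstance g hg.continuous
      have h2 := hint_eq ν inferInstance g hg.continuous
      rw [h1, h2]
      set h : X₁ → ℝ := fun x => ∫ y, g y ∂(f x : Measure X₂) with hh_def
      have hh : LipschitzWith 1 h := by
        apply LipschitzWith.of_dist_le_mul
        intro x y
        rw [NNReal.coe_one, one_mul, Real.dist_eq]
        refine le_trans ?_ (hf_lip x y)
        exact le_csSup (bddAbove_dualW1_aux _ _ (f x).prop (f y).prop) ⟨g, hg, rfl⟩
      exact le_csSup (bddAbove_dualW1_aux μ ν inferInstance inferInstance) ⟨h, hh, rfl⟩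
    · exact le_csSup (bddAbove_dualW1_aux μ ν inferInstance inferInstance)
        (zero_mem_dualW1_aux μ ν)
end

section
/- Let (X, ρ) be a compact metric space with diam(X, ρ) ≤ D for some D > 0, and let 𝔭 ∈ [1, ∞). Then W_𝔭 is effectively quasiconvex with modulus h(x) = D^{1 − 1/𝔭} x^{1/𝔭}: for every n ∈ ℕ, Borel probability measures μ₁, …, μₙ, ν₁, …, νₙ on X, and λ₁, …, λₙ ∈ [0, 1] with ∑ᵢ λᵢ = 1, one has W_𝔭(∑ᵢ λᵢ μᵢ, ∑ᵢ λᵢ νᵢ) ≤ D^{1 − 1/𝔭} · (max₁≤ᵢ≤ₙ W₁(μᵢ, νᵢ))^{1/𝔭}. -/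
open MeasureTheory Filter Topology
open scoped BigOperators NNReal ENNReal

/-- A coupling of two Borel probability measures: a probability measure on the product
whose marginals are the given measures. -/
def IsCoupling {X : Type*} [MeasurableSpace X]
    (π : Measure (X × X)) (μ ν : Measure X) : Prop :=
  IsProbabilityMeasure π ∧ π.map Prod.fst = μ ∧ π.map Prod.snd = ν

/-- The `p`-Wasserstein distance, defined as the infimum over couplings `π` of
`(∫ ρ(x,y)^p dπ)^(1/p)`. -/
noncomputable def wassersteinDist {X : Type*} [MetricSpace X] [MeasurableSpace X]
    (p : ℝ) (μ ν : Measure X) : ℝ :=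
  sInf {r : ℝ | ∃ π : Measure (X × X), IsCoupling π μ ν ∧
      r = (∫ z, dist z.1 z.2 ^ p ∂π) ^ (1 / p)}

lemma isCoupling_prod {X : Type*} [MeasurableSpace X] (μ ν : Measure X)
    [IsProbabilityMeasure μ] [IsProbabilityMeasure ν] :
    IsCoupling (μ.prod ν) μ ν := by
  refine ⟨inferInstance, ?_, ?_⟩
  · simp [Measure.map_fst_prod]
  · simp [Measure.map_snd_prod]

lemma map_mix {X : Type*} [MeasurableSpace X] {n : ℕ} (c : Fin n → ℝ≥0∞)
    (π : Fin n → Measure (X × X)) {f : X × X → X} (hf : Measurable f) :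
    (∑ i, c i • π i).map f = ∑ i, c i • (π i).map f := by
  ext s hs
  rw [Measure.map_apply hf hs, Measure.finset_sum_apply, Measure.finset_sum_apply]
  simp [Measure.smul_apply, Measure.map_apply hf hs]

/-- On a compact metric space of diameter at most `D > 0`, `W_p` is
effectively quasiconvex with modulus `h(x) = D^(1-1/p) x^(1/p)`:
`W_p(∑ᵢ λᵢ μᵢ, ∑ᵢ λᵢ νᵢ) ≤ D^(1-1/p) * (maxᵢ W₁(μᵢ, νᵢ))^(1/p)`. -/
theorem wassersteinDist_quasiconvex
    {X : Type*} [MetricSpace X] [CompactSpace X] [MeasurableSpace X] [BorelSpace X]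
    (D : ℝ) (hD0 : 0 < D) (hD : ∀ x y : X, dist x y ≤ D)
    (p : ℝ) (hp : 1 ≤ p)
    (n : ℕ) (hn : 0 < n) (lam : Fin n → ℝ≥0) (hlam : ∑ i, lam i = 1)
    (μs νs : Fin n → Measure X)
    (hμ : ∀ i, IsProbabilityMeasure (μs i)) (hν : ∀ i, IsProbabilityMeasure (νs i)) :
    wassersteinDist p (∑ i, (lam i : ℝ≥0∞) • μs i) (∑ i, (lam i : ℝ≥0∞) • νs i) ≤
      D ^ (1 - 1 / p) *
        (Finset.univ.sup' (Finset.univ_nonempty_iff.mpr (Fin.pos_iff_nonempty.mp hn))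
          fun i => wassersteinDist 1 (μs i) (νs i)) ^ (1 / p) := by
  have hp0 : (0:ℝ) < p := lt_of_lt_of_le one_pos hp
  set M := Finset.univ.sup' (Finset.univ_nonempty_iff.mpr (Fin.pos_iff_nonempty.mp hn))
    (fun i => wassersteinDist 1 (μs i) (νs i)) with hMdef
  -- continuity of the distance functions
  have hgc : Continuous fun z : X × X => dist z.1 z.2 := continuous_dist
  have hfc : Continuous fun z : X × X => dist z.1 z.2 ^ p :=
    hgc.rpow_const (fun z => Or.inr hp0.le)
  have hint : ∀ (π : Measure (X × X)) [IsProbabilityMeasure π],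
      Integrable (fun z : X × X => dist z.1 z.2 ^ p) π ∧
      Integrable (fun z : X × X => dist z.1 z.2) π := by
    intro π _
    constructor
    · exact hfc.integrable_of_hasCompactSupport
        ((isClosed_tsupport _).isCompact)
    · exact hgc.integrable_of_hasCompactSupport
        ((isClosed_tsupport _).isCompact)
  -- nonnegativity of W₁ and of M
  have hW1nonneg : ∀ i, 0 ≤ wassersteinDist 1 (μs i) (νs i) := by
    intro i
    apply Real.sInf_nonneg
    rintro r ⟨π, hπ, rfl⟩
    apply Real.rpow_nonneg
    apply integral_nonneg
    intro z
    positivity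
  have hM0 : 0 ≤ M :=
    le_trans (hW1nonneg ⟨0, hn⟩) (Finset.le_sup' (fun i => wassersteinDist 1 (μs i) (νs i)) (Finset.mem_univ ⟨0, hn⟩))
  have hlamsum : ∑ i, ((lam i : ℝ)) = 1 := by exact_mod_cast congrArg (NNReal.toReal) hlam
  -- main ε-estimate
  have key : ∀ ε : ℝ, 0 < ε →
      wassersteinDist p (∑ i, (lam i : ℝ≥0∞) • μs i) (∑ i, (lam i : ℝ≥0∞) • νs i) ≤
        D ^ (1 - 1 / p) * (M + ε) ^ (1 / p) := by
    intro ε hε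
    -- pick near-optimal couplings
    have hchoose : ∀ i : Fin n, ∃ π : Measure (X × X), IsCoupling π (μs i) (νs i) ∧
        ∫ z, dist z.1 z.2 ∂π < M + ε := by
      intro i
      haveI := hμ i; haveI := hν i
      obtain ⟨r, ⟨π, hπ, hr⟩, hlt⟩ := Real.lt_sInf_add_pos
        (⟨_, (μs i).prod (νs i), isCoupling_prod _ _, rfl⟩ :
          Set.Nonempty {r : ℝ | ∃ π : Measure (X × X), IsCoupling π (μs i) (νs i) ∧
            r = (∫ z, dist z.1 z.2 ^ (1:ℝ) ∂π) ^ (1 / (1:ℝ))}) hε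
      refine ⟨π, hπ, ?_⟩
      have hre : r = ∫ z, dist z.1 z.2 ∂π := by simpa [Real.rpow_one] using hr
      have hsup : wassersteinDist 1 (μs i) (νs i) ≤ M :=
        Finset.le_sup' (fun j => wassersteinDist 1 (μs j) (νs j)) (Finset.mem_univ i)
      calc ∫ z, dist z.1 z.2 ∂π = r := hre.symm
        _ < wassersteinDist 1 (μs i) (νs i) + ε := hlt
        _ ≤ M + ε := by linarith
    choose π hπcoup hπint using hchoose
    haveI : ∀ i, IsProbabilityMeasure (π i) := fun i => (hπcoup i).1
    set Pm : Measure (X × X) := ∑ i, (lam i : ℝ≥0∞) • π i with hPm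
    -- Pm is a coupling of the mixtures
    have hPmprob : IsProbabilityMeasure Pm := by
      constructor
      rw [hPm, Measure.finset_sum_apply]
      simp only [Measure.smul_apply, measure_univ, smul_eq_mul, mul_one]
      rw [← ENNReal.coe_finset_sum, hlam, ENNReal.coe_one]
    have hPmcoup : IsCoupling Pm (∑ i, (lam i : ℝ≥0∞) • μs i) (∑ i, (lam i : ℝ≥0∞) • νs i) := by
      refine ⟨hPmprob, ?_, ?_⟩
      · rw [hPm, map_mix _ _ measurable_fst]
        exact Finset.sum_congr rfl fun i _ => by rw [(hπcoup i).2.1]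
      · rw [hPm, map_mix _ _ measurable_snd]
        exact Finset.sum_congr rfl fun i _ => by rw [(hπcoup i).2.2]
    -- pointwise bound
    have hpt : ∀ z : X × X, dist z.1 z.2 ^ p ≤ D ^ (p - 1) * dist z.1 z.2 := by
      intro z
      rcases eq_or_lt_of_le (dist_nonneg : (0:ℝ) ≤ dist z.1 z.2) with h | h
      · rw [← h, Real.zero_rpow (ne_of_gt hp0), mul_zero]
      · have hsplit : dist z.1 z.2 ^ p = dist z.1 z.2 ^ (p - 1) * dist z.1 z.2 := by
          conv_lhs => rw [show p = (p - 1) + 1 by ring]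
          rw [Real.rpow_add h, Real.rpow_one]
        rw [hsplit]
        exact mul_le_mul_of_nonneg_right
          (Real.rpow_le_rpow dist_nonneg (hD _ _) (by linarith)) dist_nonneg
    -- bound the integral against each πᵢ
    have hIi : ∀ i, ∫ z, dist z.1 z.2 ^ p ∂(π i) ≤ D ^ (p - 1) * (M + ε) := by
      intro i
      have h1 : ∫ z, dist z.1 z.2 ^ p ∂(π i) ≤ ∫ z, D ^ (p - 1) * dist z.1 z.2 ∂(π i) :=
        integral_mono (hint (π i)).1 ((hint (π i)).2.const_mul _) hpt
      rw [integral_const_mul] at h1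
      calc ∫ z, dist z.1 z.2 ^ p ∂(π i) ≤ D ^ (p - 1) * ∫ z, dist z.1 z.2 ∂(π i) := h1
        _ ≤ D ^ (p - 1) * (M + ε) :=
          mul_le_mul_of_nonneg_left (hπint i).le (Real.rpow_nonneg hD0.le _)
    -- total integral bound
    have hsum : ∫ z, dist z.1 z.2 ^ p ∂Pm
        = ∑ i, (lam i : ℝ) * ∫ z, dist z.1 z.2 ^ p ∂(π i) := by
      rw [hPm, integral_finset_sum_measure (fun i _ => ((hint (π i)).1).smul_measure
        (by simp : (lam i : ℝ≥0∞) ≠ ⊤))]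
      exact Finset.sum_congr rfl fun i _ => by
        rw [integral_smul_measure]; simp [smul_eq_mul]
    have hCtot : ∫ z, dist z.1 z.2 ^ p ∂Pm ≤ D ^ (p - 1) * (M + ε) := by
      rw [hsum]
      calc ∑ i, (lam i : ℝ) * ∫ z, dist z.1 z.2 ^ p ∂(π i)
          ≤ ∑ i, (lam i : ℝ) * (D ^ (p - 1) * (M + ε)) :=
            Finset.sum_le_sum fun i _ => mul_le_mul_of_nonneg_left (hIi i) (lam i).coe_nonneg
        _ = D ^ (p - 1) * (M + ε) := by rw [← Finset.sum_mul, hlamsum, one_mul]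
    -- conclude via the infimum
    have hmem : (∫ z, dist z.1 z.2 ^ p ∂Pm) ^ (1 / p) ∈
        {r : ℝ | ∃ π' : Measure (X × X),
          IsCoupling π' (∑ i, (lam i : ℝ≥0∞) • μs i) (∑ i, (lam i : ℝ≥0∞) • νs i) ∧
          r = (∫ z, dist z.1 z.2 ^ p ∂π') ^ (1 / p)} := ⟨Pm, hPmcoup, rfl⟩
    have hbdd : BddBelow {r : ℝ | ∃ π' : Measure (X × X),
        IsCoupling π' (∑ i, (lam i : ℝ≥0∞) • μs i) (∑ i, (lam i : ℝ≥0∞) • νs i) ∧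
        r = (∫ z, dist z.1 z.2 ^ p ∂π') ^ (1 / p)} := by
      refine ⟨0, ?_⟩
      rintro r ⟨π', hπ', rfl⟩
      exact Real.rpow_nonneg (integral_nonneg fun z => Real.rpow_nonneg dist_nonneg p) _
    calc wassersteinDist p (∑ i, (lam i : ℝ≥0∞) • μs i) (∑ i, (lam i : ℝ≥0∞) • νs i)
        ≤ (∫ z, dist z.1 z.2 ^ p ∂Pm) ^ (1 / p) := csInf_le hbdd hmem
      _ ≤ (D ^ (p - 1) * (M + ε)) ^ (1 / p) :=
          Real.rpow_le_rpow (integral_nonneg fun z => Real.rpow_nonneg dist_nonneg p)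
            hCtot (by positivity)
      _ = D ^ (1 - 1 / p) * (M + ε) ^ (1 / p) := by
          rw [Real.mul_rpow (Real.rpow_nonneg hD0.le _) (by linarith),
            ← Real.rpow_mul hD0.le]
          congr 1
          field_simp
    -- end key
  -- pass to the limit ε → 0⁺
  have htend : Tendsto (fun ε : ℝ => D ^ (1 - 1 / p) * (M + ε) ^ (1 / p)) (𝓝[>] (0:ℝ))
      (𝓝 (D ^ (1 - 1 / p) * M ^ (1 / p))) := by
    have h1 : Tendsto (fun ε : ℝ => M + ε) (𝓝[>] (0:ℝ)) (𝓝 M) := by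
      have hc : Continuous (fun ε : ℝ => M + ε) := continuous_const.add continuous_id
      have := (hc.tendsto (0:ℝ)).mono_left (nhdsWithin_le_nhds (s := Set.Ioi (0:ℝ)))
      simpa using this
    have h2 : Tendsto (fun ε : ℝ => (M + ε) ^ (1 / p)) (𝓝[>] (0:ℝ)) (𝓝 (M ^ (1 / p))) :=
      (Real.continuousAt_rpow_const M (1 / p) (Or.inr (by positivity))).tendsto.comp h1
    exact h2.const_mul _
  exact ge_of_tendsto htend (eventually_nhdsWithin_of_forall fun ε hε => key ε hε)
end

section
/- Let (X, ρ) be a compact metric space. The ∞-Wasserstein distance is quasiconvex: for every n ∈ ℕ, Borel probability measures μ₁, …, μₙ, ν₁, …, νₙ on X, and λ₁, …, λₙ ∈ [0, 1] with ∑ᵢ λᵢ = 1, one has W_∞(∑ᵢ λᵢ μᵢ, ∑ᵢ λᵢ νᵢ) ≤ max₁≤ᵢ≤ₙ W_∞(μᵢ, νᵢ). -/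
open MeasureTheory
open scoped BigOperators NNReal ENNReal

/-- The ∞-Wasserstein distance between Borel measures on a metric space:
`W_∞(μ, ν) = inf {r > 0 | μ(U) ≤ ν(U_r) for every Borel set U}`, where `U_r` is the
open `r`-thickening of `U`. -/
noncomputable def wassersteinInfDist {X : Type*} [MetricSpace X] [MeasurableSpace X]
    (μ ν : Measure X) : ℝ :=
  sInf {r : ℝ | 0 < r ∧ ∀ U : Set X, MeasurableSet U → μ U ≤ ν (Metric.thickening r U)}

lemma feasible_mem_diam {X : Type*} [MetricSpace X] [CompactSpace X] [MeasurableSpace X]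
    (μ ν : Measure X) [IsProbabilityMeasure μ] [IsProbabilityMeasure ν] :
    (Metric.diam (Set.univ : Set X) + 1) ∈
      {r : ℝ | 0 < r ∧ ∀ U : Set X, MeasurableSet U → μ U ≤ ν (Metric.thickening r U)} := by
  refine ⟨by positivity, fun U _ => ?_⟩
  rcases U.eq_empty_or_nonempty with h | ⟨y, hy⟩
  · simp [h]
  · have hthick : Metric.thickening (Metric.diam (Set.univ : Set X) + 1) U = Set.univ := by
      ext x
      simp only [Metric.mem_thickening_iff, Set.mem_univ, iff_true]
      exact ⟨y, hy, lt_of_le_of_lt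
        (Metric.dist_le_diam_of_mem isCompact_univ.isBounded (Set.mem_univ x) (Set.mem_univ y))
        (lt_add_one _)⟩
    rw [hthick]
    calc μ U ≤ μ Set.univ := measure_mono (Set.subset_univ U)
      _ = 1 := measure_univ
      _ = ν Set.univ := measure_univ.symm

/-- On a compact metric space, the ∞-Wasserstein distance is quasiconvex:
`W_∞(∑ᵢ λᵢ μᵢ, ∑ᵢ λᵢ νᵢ) ≤ maxᵢ W_∞(μᵢ, νᵢ)` for convex coefficients `λ`. -/
theorem wassersteinInfDist_quasiconvex
    {X : Type*} [MetricSpace X] [CompactSpace X] [MeasurableSpace X] [BorelSpace X]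
    (n : ℕ) (hn : 0 < n) (lam : Fin n → ℝ≥0) (hlam : ∑ i, lam i = 1)
    (μs νs : Fin n → Measure X)
    (hμ : ∀ i, IsProbabilityMeasure (μs i)) (hν : ∀ i, IsProbabilityMeasure (νs i)) :
    wassersteinInfDist (∑ i, (lam i : ℝ≥0∞) • μs i) (∑ i, (lam i : ℝ≥0∞) • νs i) ≤
      Finset.univ.sup' (Finset.univ_nonempty_iff.mpr (Fin.pos_iff_nonempty.mp hn))
        (fun i => wassersteinInfDist (μs i) (νs i)) := by
  apply le_of_forall_gt_imp_ge_of_dense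
  intro r hr
  have hSne : ∀ i, Set.Nonempty
      {s : ℝ | 0 < s ∧ ∀ U : Set X, MeasurableSet U → μs i U ≤ νs i (Metric.thickening s U)} :=
    fun i => ⟨_, haveI := hμ i; haveI := hν i; feasible_mem_diam (μs i) (νs i)⟩
  -- r is feasible for each pair (μs i, νs i)
  have hfeas : ∀ i : Fin n, 0 < r ∧
      ∀ U : Set X, MeasurableSet U → μs i U ≤ νs i (Metric.thickening r U) := by
    intro i
    have hlt : wassersteinInfDist (μs i) (νs i) < r :=
      lt_of_le_of_lt (Finset.le_sup' (f := fun j => wassersteinInfDist (μs j) (νs j)) (Finset.mem_univ i)) hr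
    obtain ⟨s, hs, hsr⟩ := exists_lt_of_csInf_lt (hSne i) hlt
    refine ⟨hs.1.trans hsr, fun U hU => ?_⟩
    exact (hs.2 U hU).trans (measure_mono (Metric.thickening_mono hsr.le U))
  have hrpos : 0 < r := (hfeas ⟨0, hn⟩).1
  refine csInf_le ⟨0, fun s hs => hs.1.le⟩ ⟨hrpos, fun U hU => ?_⟩
  simp only [Measure.finset_sum_apply, Measure.smul_apply, smul_eq_mul]
  exact Finset.sum_le_sum fun i _ => mul_le_mul_right ((hfeas i).2 U hU) _
end

section
/- Let (X, ρ) be a compact metric space that is strictly intrinsic, i.e. for all x, y ∈ X there exists a path γ : [0,1] → X with γ(0) = x, γ(1) = y and ρ(γ(s), γ(t)) = |s − t| · ρ(x, y) for all s, t ∈ [0,1]. Then the ∞-Wasserstein space over X is strictly intrinsic: for all Borel probability measures σ, τ on X there exists a path Γ : [0,1] → P(X) with Γ(0) = σ, Γ(1) = τ and W_∞(Γ(s), Γ(t)) = |s − t| · W_∞(σ, τ) for all s, t ∈ [0,1]. -/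
open MeasureTheory

open Metric Set ENNReal Topology Filter TopologicalSpace
set_option linter.unusedSectionVars false
set_option maxHeartbeats 1000000

namespace WInf

variable {X : Type*} [MetricSpace X] [MeasurableSpace X] [BorelSpace X]

/-- The admissibility set. -/
def wset (μ ν : Measure X) : Set ℝ :=
  {r : ℝ | 0 < r ∧ ∀ U : Set X, MeasurableSet U → μ U ≤ ν (Metric.thickening r U)}

lemma wdist_eq (μ ν : Measure X) : wassersteinInfDist μ ν = sInf (wset μ ν) := rfl

lemma wset_mono {μ ν : Measure X} {r r' : ℝ} (h : r ∈ wset μ ν) (hle : r ≤ r') :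
    r' ∈ wset μ ν := by
  refine ⟨h.1.trans_le hle, fun U hU => (h.2 U hU).trans (measure_mono (thickening_mono hle U))⟩

lemma wset_bddBelow (μ ν : Measure X) : BddBelow (wset μ ν) :=
  ⟨0, fun r hr => hr.1.le⟩

variable [CompactSpace X]

lemma wset_nonempty (μ ν : Measure X) [IsProbabilityMeasure μ] [IsProbabilityMeasure ν] :
    (wset μ ν).Nonempty := by
  refine ⟨Metric.diam (univ : Set X) + 1, by positivity, fun U hU => ?_⟩
  rcases U.eq_empty_or_nonempty with rfl | ⟨x0, hx0⟩
  · simp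
  · have : thickening (Metric.diam (univ : Set X) + 1) U = univ := by
      refine eq_univ_of_forall (fun x => mem_thickening_iff.mpr ⟨x0, hx0, ?_⟩)
      have := dist_le_diam_of_mem (isBounded_of_compactSpace) (mem_univ x) (mem_univ x0)
      linarith
    rw [this]
    simpa using prob_le_one (μ := μ) (s := U)

lemma wdist_nonneg (μ ν : Measure X) : 0 ≤ wassersteinInfDist μ ν :=
  Real.sInf_nonneg (fun r hr => hr.1.le)

lemma mem_wset_of_lt {μ ν : Measure X} [IsProbabilityMeasure μ] [IsProbabilityMeasure ν]
    {r : ℝ} (h : wassersteinInfDist μ ν < r) : r ∈ wset μ ν := by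
  obtain ⟨s, hs, hsr⟩ := (csInf_lt_iff (wset_bddBelow μ ν) (wset_nonempty μ ν)).mp h
  exact wset_mono hs hsr.le

lemma wdist_le_of_mem_gt {μ ν : Measure X} {c : ℝ}
    (h : ∀ r, c < r → r ∈ wset μ ν) : wassersteinInfDist μ ν ≤ c := by
  by_contra hc
  push_neg at hc
  obtain ⟨r, hr1, hr2⟩ := exists_between hc
  exact absurd (csInf_le (wset_bddBelow μ ν) (h r hr1)) (not_le.mpr hr2)

lemma wdist_self (μ : Measure X) : wassersteinInfDist μ μ = 0 := by
  have : wset μ μ = Set.Ioi 0 := by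
    ext r
    constructor
    · exact fun h => h.1
    · exact fun h => ⟨h, fun U hU => measure_mono (self_subset_thickening h U)⟩
  rw [wdist_eq, this, csInf_Ioi]

lemma wdist_triangle (μ ν κ : Measure X) [IsProbabilityMeasure μ] [IsProbabilityMeasure ν]
    [IsProbabilityMeasure κ] :
    wassersteinInfDist μ κ ≤ wassersteinInfDist μ ν + wassersteinInfDist ν κ := by
  refine wdist_le_of_mem_gt (fun r hr => ?_)
  have h1 : 0 ≤ wassersteinInfDist μ ν := wdist_nonneg _ _
  have h2 : 0 ≤ wassersteinInfDist ν κ := wdist_nonneg _ _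
  set a := wassersteinInfDist μ ν
  set b := wassersteinInfDist ν κ
  have hd : 0 < (r - (a + b)) / 2 := by linarith
  have m1 : a + (r - (a+b))/2 ∈ wset μ ν := mem_wset_of_lt (by linarith)
  have m2 : b + (r - (a+b))/2 ∈ wset ν κ := mem_wset_of_lt (by linarith)
  have hsum : (a + (r - (a+b))/2) + (b + (r - (a+b))/2) = r := by ring
  refine ⟨by linarith, fun U hU => ?_⟩
  calc μ U ≤ ν (thickening (a + (r - (a+b))/2) U) := m1.2 U hU
    _ ≤ κ (thickening (b + (r - (a+b))/2) (thickening (a + (r - (a+b))/2) U)) :=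
        m2.2 _ (isOpen_thickening.measurableSet)
    _ ≤ κ (thickening r U) := by
        refine measure_mono (subset_trans (thickening_thickening_subset _ _ _) ?_)
        rw [add_comm (b + (r - (a+b))/2), hsum]

lemma wset_symm {μ ν : Measure X} [IsProbabilityMeasure μ] [IsProbabilityMeasure ν]
    {r : ℝ} (h : r ∈ wset μ ν) : r ∈ wset ν μ := by
  refine ⟨h.1, fun V hV => ?_⟩
  have hTmeas : MeasurableSet (thickening r V) := isOpen_thickening.measurableSet
  have key : μ ((thickening r V)ᶜ) ≤ ν (Vᶜ) := by
    refine (h.2 _ hTmeas.compl).trans (measure_mono ?_)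
    intro x hx
    rw [mem_thickening_iff] at hx
    obtain ⟨z, hz, hdz⟩ := hx
    intro hxV
    exact hz (mem_thickening_iff.mpr ⟨x, hxV, by rwa [dist_comm]⟩)
  rw [measure_compl hTmeas (measure_ne_top μ _), measure_univ,
    measure_compl hV (measure_ne_top ν _), measure_univ] at key
  have hν : ν V ≤ 1 := prob_le_one
  calc ν V = 1 - (1 - ν V) := (ENNReal.sub_sub_cancel one_ne_top hν).symm
    _ ≤ 1 - (1 - μ (thickening r V)) := tsub_le_tsub_left key 1
    _ ≤ μ (thickening r V) := le_of_eq (ENNReal.sub_sub_cancel one_ne_top prob_le_one)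

lemma wdist_comm (μ ν : Measure X) [IsProbabilityMeasure μ] [IsProbabilityMeasure ν] :
    wassersteinInfDist μ ν = wassersteinInfDist ν μ := by
  have : ∀ (α β : Measure X) [IsProbabilityMeasure α] [IsProbabilityMeasure β],
      wassersteinInfDist β α ≤ wassersteinInfDist α β := by
    intro α β _ _
    refine wdist_le_of_mem_gt (fun r hr => wset_symm (mem_wset_of_lt hr))
  exact le_antisymm (this ν μ) (this μ ν)

end WInf

section G2
variable {X : Type*} [MetricSpace X] [MeasurableSpace X] [BorelSpace X]

lemma discrete_aux [Nonempty X] (ε : ℝ) (l : List X) :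
    ∃ f : X → X, Measurable f ∧ (Set.range f).Finite ∧
      ∀ x, (∃ c ∈ l, x ∈ ball c ε) → dist x (f x) < ε := by
  classical
  induction l with
  | nil => exact ⟨fun _ => Classical.arbitrary X, measurable_const,
      Set.finite_range_const, by simp⟩
  | cons c l ih =>
    obtain ⟨f, hf, hfin, hprop⟩ := ih
    refine ⟨fun x => if x ∈ ball c ε then c else f x,
      Measurable.ite measurableSet_ball measurable_const hf,
      (hfin.insert c).subset ?_, ?_⟩
    · rintro y ⟨x, rfl⟩
      by_cases h : x ∈ ball c ε <;> simp [h]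
    · rintro x ⟨c', hc', hx⟩
      by_cases h : x ∈ ball c ε
      · simpa [h] using mem_ball.mp h
      · rcases List.mem_cons.mp hc' with rfl | hc'
        · exact absurd hx h
        · simpa [h] using hprop x ⟨c', hc', hx⟩

lemma exists_discretization [CompactSpace X] [Nonempty X] (ε : ℝ) (hε : 0 < ε) :
    ∃ f : X → X, Measurable f ∧ (Set.range f).Finite ∧ ∀ x, dist x (f x) < ε := by
  obtain ⟨t, ht⟩ := (isCompact_univ (X := X)).elim_finite_subcover (fun c : X => ball c ε)
    (fun c => isOpen_ball) (fun x _ => mem_iUnion.mpr ⟨x, mem_ball_self hε⟩)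
  obtain ⟨f, hf, hfin, hprop⟩ := discrete_aux ε t.toList
  refine ⟨f, hf, hfin, fun x => hprop x ?_⟩
  have := ht (mem_univ x)
  simp only [mem_iUnion, exists_prop] at this
  obtain ⟨c, hc, hxc⟩ := this
  exact ⟨c, by simpa using hc, hxc⟩

-- atomic representation
lemma atomic_repr (A : Finset X) (μ : Measure X) [IsFiniteMeasure μ] (hA : μ (↑A)ᶜ = 0) :
    μ = ∑ a ∈ A, μ {a} • Measure.dirac a := by
  ext s hs
  rw [Measure.finset_sum_apply]
  simp only [Measure.smul_apply, smul_eq_mul]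
  classical
  have h1 : μ s = μ (s ∩ A) := by
    refine le_antisymm ?_ (measure_mono inter_subset_left)
    calc μ s ≤ μ (s ∩ A) + μ (s ∩ (↑A)ᶜ) := by
          conv_lhs => rw [← Set.inter_union_compl s ↑A]
          exact measure_union_le _ _
      _ ≤ μ (s ∩ A) + 0 :=
          add_le_add_right (le_trans (measure_mono inter_subset_right) hA.le) _
      _ = μ (s ∩ A) := add_zero _
  have h2 : s ∩ ↑A = ⋃ a ∈ A.filter (· ∈ s), ({a} : Set X) := by
    ext x
    simp only [mem_inter_iff, mem_iUnion, Finset.mem_filter, mem_singleton_iff, exists_prop]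
    constructor
    · rintro ⟨hxs, hxA⟩; exact ⟨x, ⟨by exact_mod_cast hxA, hxs⟩, rfl⟩
    · rintro ⟨a, ⟨haA, has⟩, rfl⟩; exact ⟨has, by exact_mod_cast haA⟩
  rw [h1, h2, measure_biUnion_finset ?_ (fun a _ => measurableSet_singleton a)]
  · rw [Finset.sum_filter]
    refine Finset.sum_congr rfl (fun a _ => ?_)
    rw [Measure.dirac_apply' a hs, Set.indicator_apply]
    by_cases h : a ∈ s <;> simp [h]
  · intro a ha b hb hab
    simp only [Set.disjoint_singleton_left, mem_singleton_iff]
    exact hab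

end G2

noncomputable section G5

/-- Limit along an ultrafilter in `ℝ≥0∞`. -/
def ulim (𝒰 : Ultrafilter ℕ) (f : ℕ → ℝ≥0∞) : ℝ≥0∞ :=
  ((isCompact_univ (X := ℝ≥0∞)).ultrafilter_le_nhds (𝒰.map f) (by simp)).choose

lemma tendsto_ulim (𝒰 : Ultrafilter ℕ) (f : ℕ → ℝ≥0∞) : Tendsto f 𝒰 (𝓝 (ulim 𝒰 f)) :=
  ((isCompact_univ (X := ℝ≥0∞)).ultrafilter_le_nhds (𝒰.map f) (by simp)).choose_spec.2

lemma ulim_eq {𝒰 : Ultrafilter ℕ} {f : ℕ → ℝ≥0∞} {L : ℝ≥0∞} (h : Tendsto f 𝒰 (𝓝 L)) :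
    ulim 𝒰 f = L :=
  tendsto_nhds_unique (tendsto_ulim 𝒰 f) h

lemma ulim_const (𝒰 : Ultrafilter ℕ) (c : ℝ≥0∞) : ulim 𝒰 (fun _ => c) = c :=
  ulim_eq tendsto_const_nhds

lemma ulim_mono {𝒰 : Ultrafilter ℕ} {f g : ℕ → ℝ≥0∞} (h : ∀ᶠ n in 𝒰, f n ≤ g n) :
    ulim 𝒰 f ≤ ulim 𝒰 g :=
  le_of_tendsto_of_tendsto (tendsto_ulim 𝒰 f) (tendsto_ulim 𝒰 g) h

lemma ulim_le {𝒰 : Ultrafilter ℕ} {f : ℕ → ℝ≥0∞} {c : ℝ≥0∞} (h : ∀ᶠ n in 𝒰, f n ≤ c) :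
    ulim 𝒰 f ≤ c := by
  rw [← ulim_const 𝒰 c]; exact ulim_mono h

lemma le_ulim {𝒰 : Ultrafilter ℕ} {f : ℕ → ℝ≥0∞} {c : ℝ≥0∞} (h : ∀ᶠ n in 𝒰, c ≤ f n) :
    c ≤ ulim 𝒰 f := by
  rw [← ulim_const 𝒰 c]; exact ulim_mono h

variable {X : Type*} [MetricSpace X] [MeasurableSpace X] [BorelSpace X]

/-- The content given by ultrafilter limits of a sequence of probability measures. -/
lemma ulim_meas_ne_top {𝒰 : Ultrafilter ℕ} {μs : ℕ → Measure X}
    (hp : ∀ n, IsProbabilityMeasure (μs n)) (s : Set X) :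
    ulim 𝒰 (fun n => μs n s) ≠ ⊤ := by
  have h2 : ulim 𝒰 (fun n => μs n s) ≤ 1 :=
    ulim_le (Eventually.of_forall fun n => haveI := hp n; prob_le_one)
  exact (h2.trans_lt one_lt_top).ne

def limitContent (𝒰 : Ultrafilter ℕ) (μs : ℕ → Measure X)
    (hp : ∀ n, IsProbabilityMeasure (μs n)) : Content X where
  toFun K := (ulim 𝒰 fun n => μs n K).toNNReal
  mono' K1 K2 h :=
    ENNReal.toNNReal_mono (ulim_meas_ne_top hp _)
      (ulim_mono (Eventually.of_forall fun n => measure_mono h))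
  sup_disjoint' K1 K2 hd h1 h2 := by
    have hadd : ulim 𝒰 (fun n => μs n (↑(K1 ⊔ K2)))
        = ulim 𝒰 (fun n => μs n K1) + ulim 𝒰 (fun n => μs n K2) := by
      have ht := (tendsto_ulim 𝒰 (fun n => μs n (K1 : Set X))).add
        (tendsto_ulim 𝒰 (fun n => μs n (K2 : Set X)))
      refine ulim_eq (Tendsto.congr (fun n => ?_) ht)
      rw [Compacts.coe_sup]
      exact (measure_union hd h2.measurableSet).symm
    rw [hadd, ENNReal.toNNReal_add (ulim_meas_ne_top hp _) (ulim_meas_ne_top hp _)]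
  sup_le' K1 K2 := by
    have hle : ulim 𝒰 (fun n => μs n (↑(K1 ⊔ K2)))
        ≤ ulim 𝒰 (fun n => μs n K1) + ulim 𝒰 (fun n => μs n K2) := by
      have ht := (tendsto_ulim 𝒰 (fun n => μs n (K1 : Set X))).add
        (tendsto_ulim 𝒰 (fun n => μs n (K2 : Set X)))
      refine le_of_tendsto_of_tendsto (tendsto_ulim _ _) ht
        (Eventually.of_forall fun n => ?_)
      rw [Compacts.coe_sup]
      exact measure_union_le _ _
    refine le_trans (ENNReal.toNNReal_mono
      (ENNReal.add_ne_top.mpr ⟨ulim_meas_ne_top hp _, ulim_meas_ne_top hp _⟩) hle) ?_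
    rw [ENNReal.toNNReal_add (ulim_meas_ne_top hp _) (ulim_meas_ne_top hp _)]

/-- The limit measure. -/
def limitMeasure (𝒰 : Ultrafilter ℕ) (μs : ℕ → Measure X)
    (hp : ∀ n, IsProbabilityMeasure (μs n)) : Measure X :=
  (limitContent 𝒰 μs hp).measure

lemma limitContent_coe (𝒰 : Ultrafilter ℕ) (μs : ℕ → Measure X)
    (hp : ∀ n, IsProbabilityMeasure (μs n)) (K : Compacts X) :
    (limitContent 𝒰 μs hp) K = ulim 𝒰 (fun n => μs n K) := by
  show (((ulim 𝒰 fun n => μs n (K : Set X)).toNNReal : NNReal) : ℝ≥0∞) = _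
  exact ENNReal.coe_toNNReal (ulim_meas_ne_top hp _)

lemma le_limitMeasure_compact {𝒰 : Ultrafilter ℕ} {μs : ℕ → Measure X}
    {hp : ∀ n, IsProbabilityMeasure (μs n)} {C : Set X} (hC : IsCompact C) :
    ulim 𝒰 (fun n => μs n C) ≤ limitMeasure 𝒰 μs hp C := by
  have h1 := (limitContent 𝒰 μs hp).le_outerMeasure_compacts ⟨C, hC⟩
  rw [limitContent_coe] at h1
  rwa [limitMeasure, Content.measure_apply _ hC.isClosed.measurableSet]

lemma limitMeasure_open_lt {𝒰 : Ultrafilter ℕ} {μs : ℕ → Measure X}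
    {hp : ∀ n, IsProbabilityMeasure (μs n)} {V : Set X} (hV : IsOpen V) {c : ℝ≥0∞}
    (hc : c < limitMeasure 𝒰 μs hp V) :
    ∃ K : Set X, IsCompact K ∧ K ⊆ V ∧ c < ulim 𝒰 (fun n => μs n K) := by
  rw [limitMeasure, Content.measure_apply _ hV.measurableSet,
    (limitContent 𝒰 μs hp).outerMeasure_of_isOpen V hV] at hc
  rw [Content.innerContent] at hc
  obtain ⟨K, hK⟩ := lt_iSup_iff.mp hc
  obtain ⟨hKV, hcK⟩ := lt_iSup_iff.mp hK
  rw [limitContent_coe] at hcK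
  exact ⟨K, K.isCompact, hKV, hcK⟩

lemma limitMeasure_isProbability (𝒰 : Ultrafilter ℕ) (μs : ℕ → Measure X)
    (hp : ∀ n, IsProbabilityMeasure (μs n)) [CompactSpace X] :
    IsProbabilityMeasure (limitMeasure 𝒰 μs hp) := by
  constructor
  refine le_antisymm ?_ ?_
  · rw [limitMeasure, Content.measure_apply _ MeasurableSet.univ,
      (limitContent 𝒰 μs hp).outerMeasure_of_isOpen univ isOpen_univ]
    rw [Content.innerContent]
    refine iSup_le fun K => iSup_le fun _ => ?_
    rw [limitContent_coe]
    exact ulim_le (Eventually.of_forall fun n => haveI := hp n; prob_le_one)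
  · have := le_limitMeasure_compact (𝒰 := 𝒰) (μs := μs) (hp := hp) isCompact_univ
    refine le_trans (le_of_eq ?_) this
    refine (ulim_eq (Tendsto.congr (fun n => ?_) tendsto_const_nhds)).symm
    exact (measure_univ (μ := μs n)).symm

end G5

section G6
variable {X : Type*} [MetricSpace X] [MeasurableSpace X] [BorelSpace X] [CompactSpace X]

lemma wdist_le_of_limits (𝒰 : Ultrafilter ℕ) (μn νn : ℕ → Measure X)
    (hμp : ∀ n, IsProbabilityMeasure (μn n)) (hνp : ∀ n, IsProbabilityMeasure (νn n))
    (μ ν : Measure X) [IsProbabilityMeasure μ] [IsProbabilityMeasure ν]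
    (Hμ : ∀ V : Set X, IsOpen V → ∀ c : ℝ≥0∞, c < μ V →
       ∃ K : Set X, IsCompact K ∧ K ⊆ V ∧ c < ulim 𝒰 (fun n => μn n K))
    (Hν : ∀ C : Set X, IsClosed C → ulim 𝒰 (fun n => νn n C) ≤ ν C)
    (rn : ℕ → ℝ) (r : ℝ) (hr : 0 ≤ r) (hrn : Tendsto rn (𝒰 : Filter ℕ) (𝓝 r))
    (hW : ∀ n, wassersteinInfDist (μn n) (νn n) ≤ rn n) :
    wassersteinInfDist μ ν ≤ r := by
  refine WInf.wdist_le_of_mem_gt (fun r' hr' => ?_)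
  have hr'0 : 0 < r' := lt_of_le_of_lt hr hr'
  have main : ∀ C : Set X, IsClosed C → μ C ≤ ν (thickening r' C) := by
    intro C hC
    set δ := (r' - r)/3 with hδdef
    have hδ : 0 < δ := by simp only [hδdef]; linarith
    have hsub : cthickening (r + 2*δ) C ⊆ thickening r' C :=
      cthickening_subset_thickening' hr'0 (by simp only [hδdef]; linarith) C
    refine le_trans ?_ (measure_mono hsub)
    refine le_of_forall_lt (fun c hc => ?_)
    have hCV : μ C ≤ μ (thickening δ C) := measure_mono (self_subset_thickening hδ C)
    obtain ⟨K, hKcpt, hKV, hcK⟩ := Hμ (thickening δ C) isOpen_thickening c (hc.trans_le hCV)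
    have hE : ∀ᶠ n in (𝒰 : Filter ℕ), rn n < r + δ :=
      hrn.eventually_lt_const (by linarith)
    have hstep : ∀ᶠ n in (𝒰 : Filter ℕ),
        μn n K ≤ νn n (cthickening (r + 2*δ) C) := by
      filter_upwards [hE] with n hn
      haveI := hμp n; haveI := hνp n
      have hmem : (r + δ) ∈ WInf.wset (μn n) (νn n) :=
        WInf.mem_wset_of_lt (lt_of_le_of_lt (hW n) hn)
      refine le_trans (hmem.2 K hKcpt.isClosed.measurableSet) (measure_mono ?_)
      calc thickening (r + δ) K ⊆ thickening (r + δ) (thickening δ C) :=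
            thickening_subset_of_subset _ hKV
        _ ⊆ thickening (r + δ + δ) C := thickening_thickening_subset _ _ _
        _ ⊆ cthickening (r + 2*δ) C := by
            rw [show r + δ + δ = r + 2*δ by ring]
            exact thickening_subset_cthickening _ _
    calc c < ulim 𝒰 (fun n => μn n K) := hcK
      _ ≤ ulim 𝒰 (fun n => νn n (cthickening (r + 2*δ) C)) := ulim_mono hstep
      _ ≤ ν (cthickening (r + 2*δ) C) := Hν _ isClosed_cthickening
  refine ⟨hr'0, fun U hU => ?_⟩
  calc μ U ≤ μ (closure U) := measure_mono subset_closure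
    _ ≤ ν (thickening r' (closure U)) := main _ isClosed_closure
    _ = ν (thickening r' U) := by rw [thickening_closure]
end G6

section G3
variable {X : Type*} [MetricSpace X] [MeasurableSpace X] [BorelSpace X]

lemma sum_atoms_eq_one (A : Finset X) (μ : Measure X) [IsProbabilityMeasure μ]
    (hA : μ (↑A)ᶜ = 0) : ∑ a ∈ A, μ {a} = 1 := by
  have h := atomic_repr A μ hA
  have h2 : μ univ = ∑ a ∈ A, μ {a} := by
    conv_lhs => rw [h]
    rw [Measure.finset_sum_apply]
    simp
  rw [← h2, measure_univ]

lemma meas_coe_finset_one (A : Finset X) (μ : Measure X) [IsProbabilityMeasure μ]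
    (hA : μ (↑A)ᶜ = 0) : μ ↑A = 1 := by
  refine le_antisymm prob_le_one ?_
  calc (1:ℝ≥0∞) = μ univ := measure_univ.symm
    _ ≤ μ ↑A + μ (↑A)ᶜ := by
        rw [← Set.union_compl_self (↑A : Set X)]
        exact measure_union_le _ _
    _ = μ ↑A := by rw [hA, add_zero]

lemma discrete_gale_contradiction (A B : Finset X) (σn τn : Measure X)
    [IsProbabilityMeasure σn] [IsProbabilityMeasure τn]
    (hA : σn (↑A)ᶜ = 0) (hB : τn (↑B)ᶜ = 0) (r : ℝ)
    (hrev : ∀ U : Set X, MeasurableSet U → τn U ≤ σn (thickening r U))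
    (uA vB : X → ℝ) (u : ℝ)
    (hedge : ∀ a ∈ A, ∀ b ∈ B, dist a b < r → uA a + vB b < u)
    (hgt : u < (∑ a ∈ A, (σn {a}).toReal * uA a) + ∑ b ∈ B, (τn {b}).toReal * vB b) :
    False := by
  classical
  have hAne : A.Nonempty := by
    rcases A.eq_empty_or_nonempty with rfl | h
    · exfalso
      have := meas_coe_finset_one ∅ σn hA
      simpa using this
    · exact h
  set pa : X → ℝ := fun a => (σn {a}).toReal with hpa
  set qb : X → ℝ := fun b => (τn {b}).toReal with hqb
  have hpa1 : ∑ a ∈ A, pa a = 1 := by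
    rw [hpa, ← ENNReal.toReal_sum (fun a _ => measure_ne_top _ _),
      sum_atoms_eq_one A σn hA, ENNReal.toReal_one]
  have hqb1 : ∑ b ∈ B, qb b = 1 := by
    rw [hqb, ← ENNReal.toReal_sum (fun b _ => measure_ne_top _ _),
      sum_atoms_eq_one B τn hB, ENNReal.toReal_one]
  set C0 : ℝ := A.sup' hAne uA with hC0
  set f0 : X → ℝ := fun x => C0 - uA x with hf0def
  set g0 : X → ℝ := fun x => vB x - u + C0 with hg0def
  have hf0 : ∀ a ∈ A, 0 ≤ f0 a := fun a ha => by
    simp only [hf0def, sub_nonneg]; exact Finset.le_sup' uA ha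
  have hfg : ∀ a ∈ A, ∀ b ∈ B, dist a b < r → g0 b < f0 a := by
    intro a ha b hb hab
    have := hedge a ha b hb hab
    simp only [hf0def, hg0def]
    linarith
  have hstrict : (∑ a ∈ A, pa a * f0 a) < ∑ b ∈ B, qb b * g0 b := by
    have e1 : ∑ a ∈ A, pa a * f0 a = C0 - ∑ a ∈ A, pa a * uA a := by
      simp only [hf0def, mul_sub]
      rw [Finset.sum_sub_distrib, ← Finset.sum_mul, hpa1, one_mul]
    have e2 : ∑ b ∈ B, qb b * g0 b = (∑ b ∈ B, qb b * vB b) - u + C0 := by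
      simp only [hg0def, mul_sub, mul_add]
      rw [Finset.sum_add_distrib, Finset.sum_sub_distrib, ← Finset.sum_mul, ← Finset.sum_mul,
        hqb1, one_mul, one_mul]
    rw [e1, e2]
    linarith
  set Freal : X → ℝ := fun x => ∑ a ∈ A, Set.indicator {a} (fun _ => f0 a) x with hFdef
  set Greal : X → ℝ := fun x => ∑ b ∈ B, Set.indicator {b} (fun _ => max (g0 b) 0) x with hGdef
  have hFval : ∀ a ∈ A, Freal a = f0 a := by
    intro a ha
    simp only [hFdef]
    rw [Finset.sum_eq_single a (fun a' _ ha' => Set.indicator_of_notMem (by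
      simp only [mem_singleton_iff]; exact fun h => ha' h.symm) _) (fun h => absurd ha h)]
    · simp
  have hGval : ∀ b ∈ B, Greal b = max (g0 b) 0 := by
    intro b hb
    simp only [hGdef]
    rw [Finset.sum_eq_single b (fun b' _ hb' => Set.indicator_of_notMem (by
      simp only [mem_singleton_iff]; exact fun h => hb' h.symm) _) (fun h => absurd hb h)]
    · simp
  have hFzero : ∀ x ∉ (A : Set X), Freal x = 0 := by
    intro x hx
    simp only [hFdef]
    refine Finset.sum_eq_zero (fun a ha => Set.indicator_of_notMem ?_ _)
    simp only [mem_singleton_iff]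
    exact fun h => hx (h ▸ ha)
  have hGzero : ∀ x ∉ (B : Set X), Greal x = 0 := by
    intro x hx
    simp only [hGdef]
    refine Finset.sum_eq_zero (fun b hb => Set.indicator_of_notMem ?_ _)
    simp only [mem_singleton_iff]
    exact fun h => hx (h ▸ hb)
  have hFnn : ∀ x, 0 ≤ Freal x := by
    intro x
    by_cases hx : x ∈ (A : Set X)
    · rw [hFval x hx]; exact hf0 x hx
    · rw [hFzero x hx]
  have hGnn : ∀ x, 0 ≤ Greal x := by
    intro x
    by_cases hx : x ∈ (B : Set X)
    · rw [hGval x hx]; exact le_max_right _ _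
    · rw [hGzero x hx]
  have hFmeas : Measurable Freal := by
    simp only [hFdef]
    exact Finset.measurable_sum A (fun a _ =>
      Measurable.indicator measurable_const (measurableSet_singleton a))
  have hGmeas : Measurable Greal := by
    simp only [hGdef]
    exact Finset.measurable_sum B (fun b _ =>
      Measurable.indicator measurable_const (measurableSet_singleton b))
  -- integral identities
  have IntF : ∫⁻ x, ENNReal.ofReal (Freal x) ∂σn = ∑ a ∈ A, σn {a} * ENNReal.ofReal (f0 a) := by
    conv_lhs => rw [atomic_repr A σn hA]
    rw [lintegral_finset_sum_measure]
    refine Finset.sum_congr rfl (fun a ha => ?_)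
    rw [lintegral_smul_measure, lintegral_dirac, hFval a ha, smul_eq_mul]
  have IntG : ∫⁻ x, ENNReal.ofReal (Greal x) ∂τn
      = ∑ b ∈ B, τn {b} * ENNReal.ofReal (max (g0 b) 0) := by
    conv_lhs => rw [atomic_repr B τn hB]
    rw [lintegral_finset_sum_measure]
    refine Finset.sum_congr rfl (fun b hb => ?_)
    rw [lintegral_smul_measure, lintegral_dirac, hGval b hb, smul_eq_mul]
  -- pointwise tail bound
  have tail : ∀ t ∈ Set.Ioi (0:ℝ), τn {x | t < Greal x} ≤ σn {x | t < Freal x} := by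
    intro t ht
    rw [Set.mem_Ioi] at ht
    have hsub1 : {x | t < Greal x} ⊆ ↑(B.filter (fun b => t < max (g0 b) 0)) := by
      intro x hx
      rw [Set.mem_setOf_eq] at hx
      by_cases hxB : x ∈ B
      · simp only [Finset.coe_filter, Set.mem_setOf_eq]
        exact ⟨hxB, by rwa [hGval x hxB] at hx⟩
      · rw [hGzero x hxB] at hx; linarith
    set Sfin := B.filter (fun b => t < max (g0 b) 0) with hSfin
    have step1 : τn {x | t < Greal x} ≤ τn ↑Sfin := measure_mono hsub1
    have step2 : τn ↑Sfin ≤ σn (thickening r ↑Sfin) := hrev _ (Finset.measurableSet _)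
    have hsub2 : thickening r ↑Sfin ⊆ {x | t < Freal x} ∪ (↑A)ᶜ := by
      intro x hx
      by_cases hxA : x ∈ A
      · left
        rw [mem_thickening_iff] at hx
        obtain ⟨b, hbS, hdist⟩ := hx
        rw [hSfin] at hbS
        simp only [Finset.coe_filter, Set.mem_setOf_eq] at hbS
        obtain ⟨hbB, hbt⟩ := hbS
        have hg0b : t < g0 b := by
          rcases lt_max_iff.mp hbt with h | h
          · exact h
          · linarith
        have := hfg x hxA b hbB hdist
        rw [Set.mem_setOf_eq, hFval x hxA]
        linarith
      · right; exact hxA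
    have step3 : σn (thickening r ↑Sfin) ≤ σn {x | t < Freal x} := by
      refine le_trans (measure_mono hsub2) ?_
      refine le_trans (measure_union_le _ _) ?_
      rw [hA, add_zero]
    exact step1.trans (step2.trans step3)
  -- layercake
  have LF := lintegral_eq_lintegral_meas_lt σn (Filter.Eventually.of_forall hFnn)
    hFmeas.aemeasurable
  have LG := lintegral_eq_lintegral_meas_lt τn (Filter.Eventually.of_forall hGnn)
    hGmeas.aemeasurable
  have hmono : ∫⁻ t in Set.Ioi (0:ℝ), τn {x | t < Greal x}
      ≤ ∫⁻ t in Set.Ioi (0:ℝ), σn {x | t < Freal x} := by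
    refine setLIntegral_mono (Antitone.measurable (fun t1 t2 h12 => measure_mono
      (fun x hx => lt_of_le_of_lt h12 hx))) tail
  have final : (∑ b ∈ B, τn {b} * ENNReal.ofReal (max (g0 b) 0))
      ≤ ∑ a ∈ A, σn {a} * ENNReal.ofReal (f0 a) := by
    rw [← IntF, ← IntG, LF, LG]
    exact hmono
  -- convert to reals
  have hne : (∑ a ∈ A, σn {a} * ENNReal.ofReal (f0 a)) ≠ ⊤ := by
    refine (ENNReal.sum_lt_top.mpr (fun a _ => ?_)).ne
    exact ENNReal.mul_lt_top (measure_lt_top _ _) ENNReal.ofReal_lt_top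
  have freal : (∑ b ∈ B, qb b * max (g0 b) 0) ≤ ∑ a ∈ A, pa a * f0 a := by
    have := ENNReal.toReal_mono hne final
    rw [ENNReal.toReal_sum (fun a _ => (ENNReal.mul_lt_top (measure_lt_top _ _)
        ENNReal.ofReal_lt_top).ne),
      ENNReal.toReal_sum (fun b _ => (ENNReal.mul_lt_top (measure_lt_top _ _)
        ENNReal.ofReal_lt_top).ne)] at this
    calc ∑ b ∈ B, qb b * max (g0 b) 0
        = ∑ b ∈ B, (τn {b} * ENNReal.ofReal (max (g0 b) 0)).toReal := by
          refine Finset.sum_congr rfl (fun b _ => ?_)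
          rw [ENNReal.toReal_mul, ENNReal.toReal_ofReal (le_max_right _ _)]
      _ ≤ ∑ a ∈ A, (σn {a} * ENNReal.ofReal (f0 a)).toReal := this
      _ = ∑ a ∈ A, pa a * f0 a := by
          refine Finset.sum_congr rfl (fun a ha => ?_)
          rw [ENNReal.toReal_mul, ENNReal.toReal_ofReal (hf0 a ha)]
  have hgle : (∑ b ∈ B, qb b * g0 b) ≤ ∑ b ∈ B, qb b * max (g0 b) 0 := by
    refine Finset.sum_le_sum (fun b _ => ?_)
    exact mul_le_mul_of_nonneg_left (le_max_left _ _) ENNReal.toReal_nonneg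
  linarith

end G3

section G3B
variable {X : Type*} [MetricSpace X] [MeasurableSpace X] [BorelSpace X] [CompactSpace X]

lemma finite_strassen (A B : Finset X) (σn τn : Measure X)
    [IsProbabilityMeasure σn] [IsProbabilityMeasure τn]
    (hA : σn (↑A)ᶜ = 0) (hB : τn (↑B)ᶜ = 0) {r : ℝ}
    (hall : r ∈ WInf.wset σn τn) :
    ∃ π : X → X → ℝ≥0∞,
      (∀ a b, π a b ≠ 0 → a ∈ A ∧ b ∈ B ∧ dist a b < r) ∧
      (∀ a, (∑ b ∈ B, π a b) = σn {a}) ∧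
      (∀ b, (∑ a ∈ A, π a b) = τn {b}) := by
  classical
  have hrev : ∀ U : Set X, MeasurableSet U → τn U ≤ σn (thickening r U) :=
    fun U hU => (WInf.wset_symm hall).2 U hU
  set E : Finset (X × X) := (A ×ˢ B).filter (fun p => dist p.1 p.2 < r) with hE
  have hEmem : ∀ p : X × X, p ∈ E ↔ (p.1 ∈ A ∧ p.2 ∈ B ∧ dist p.1 p.2 < r) := by
    intro p
    simp only [hE, Finset.mem_filter, Finset.mem_product, and_assoc]
  by_cases hEne : E.Nonempty
  swap
  · exfalso
    rw [Finset.not_nonempty_iff_eq_empty] at hEne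
    have h1 : σn ↑A = 1 := meas_coe_finset_one A σn hA
    have h2 : thickening r ↑A ⊆ ((B : Set X))ᶜ := by
      intro x hx hxB
      rw [mem_thickening_iff] at hx
      obtain ⟨a, haA, hdist⟩ := hx
      have : (a, x) ∈ E := (hEmem (a, x)).mpr ⟨Finset.mem_coe.mp haA, Finset.mem_coe.mp hxB,
        by rwa [dist_comm] at hdist⟩
      rw [hEne] at this
      exact absurd this (Finset.notMem_empty _)
    have := (hall.2 ↑A (Finset.measurableSet A)).trans ((measure_mono h2).trans hB.le)
    rw [h1] at this
    simp at this
  haveI : Nonempty ↥E := hEne.coe_sort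
  -- ambient space and vectors
  set vecA : X → ((↥A ⊕ ↥B) → ℝ) := fun x =>
    Sum.elim (fun a => if (a : X) = x then 1 else 0) (fun _ => 0) with hvecA
  set vecB : X → ((↥A ⊕ ↥B) → ℝ) := fun x =>
    Sum.elim (fun _ => 0) (fun b => if (b : X) = x then 1 else 0) with hvecB
  set vec : X × X → ((↥A ⊕ ↥B) → ℝ) := fun p => vecA p.1 + vecB p.2 with hvec
  set L : (↥E → ℝ) →ₗ[ℝ] ((↥A ⊕ ↥B) → ℝ) :=
    { toFun := fun w => ∑ e : ↥E, w e • vec (e : X × X)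
      map_add' := fun w1 w2 => by
        simp only [Pi.add_apply, add_smul]
        rw [Finset.sum_add_distrib]
      map_smul' := fun c w => by
        simp only [Pi.smul_apply, smul_eq_mul, RingHom.id_apply, ← smul_smul]
        rw [← Finset.smul_sum] } with hL
  set M : Set ((↥A ⊕ ↥B) → ℝ) := L '' stdSimplex ℝ ↥E with hM
  have hMconvex : Convex ℝ M := (convex_stdSimplex ℝ ↥E).linear_image L
  have hMcompact : IsCompact M :=
    ((isCompact_stdSimplex ℝ ↥E).image L.continuous_of_finiteDimensional)
  set P0 : (↥A ⊕ ↥B) → ℝ :=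
    Sum.elim (fun a => (σn {(a : X)}).toReal) (fun b => (τn {(b : X)}).toReal) with hP0
  by_cases hP : P0 ∈ M
  · -- extract the coupling
    obtain ⟨w, hw, hLw⟩ := hP
    set wext : X × X → ℝ := fun p => if h : p ∈ E then w ⟨p, h⟩ else 0 with hwext
    have hwextnn : ∀ p, 0 ≤ wext p := by
      intro p
      simp only [hwext]
      split
      · exact hw.1 _
      · exact le_rfl
    have hwext0 : ∀ p ∉ E, wext p = 0 := fun p hp => by simp only [hwext, dif_neg hp]
    refine ⟨fun a b => ENNReal.ofReal (wext (a, b)), ?_, ?_, ?_⟩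
    · intro a b hne
      by_cases h : (a, b) ∈ E
      · exact (hEmem (a, b)).mp h
      · exact absurd (show ENNReal.ofReal (wext (a, b)) = 0 by
          rw [hwext0 _ h, ENNReal.ofReal_zero]) hne
    · -- row sums
      intro a
      show ∑ b ∈ B, ENNReal.ofReal (wext (a, b)) = σn {a}
      by_cases haA : a ∈ A
      · have key : ∑ b ∈ B, wext (a, b) = (σn {a}).toReal := by
          have hcoord := congrFun hLw (Sum.inl ⟨a, haA⟩)
          have lhs_eq : (L w) (Sum.inl ⟨a, haA⟩)
              = ∑ p ∈ E, wext p * (if ((⟨a, haA⟩ : ↥A) : X) = p.1 then 1 else 0) := by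
            show (∑ e : ↥E, w e • vec (e : X × X)) (Sum.inl ⟨a, haA⟩)
              = ∑ p ∈ E, wext p * (if ((⟨a, haA⟩ : ↥A) : X) = p.1 then 1 else 0)
            rw [Finset.sum_apply]
            rw [← Finset.sum_coe_sort E
              (fun p => wext p * (if ((⟨a, haA⟩ : ↥A) : X) = p.1 then 1 else 0))]
            refine Finset.sum_congr rfl (fun e _ => ?_)
            have hwe : wext (e : X × X) = w e := by
              simp only [hwext, dif_pos (e : ↥E).2]
            rw [hwe]
            simp only [Pi.smul_apply, smul_eq_mul, hvec, Pi.add_apply, hvecA, hvecB,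
              Sum.elim_inl, add_zero]
          have rhs_eq : P0 (Sum.inl ⟨a, haA⟩) = (σn {a}).toReal := by
            simp only [hP0, Sum.elim_inl]
          rw [lhs_eq, rhs_eq] at hcoord
          rw [← hcoord]
          -- now reindex
          calc ∑ b ∈ B, wext (a, b)
              = ∑ b ∈ B, if (a, b) ∈ E then wext (a, b) else 0 := by
                refine Finset.sum_congr rfl (fun b _ => ?_)
                by_cases h : (a, b) ∈ E
                · rw [if_pos h]
                · rw [if_neg h, hwext0 _ h]
            _ = ∑ b ∈ B.filter (fun b => (a, b) ∈ E), wext (a, b) :=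
                (Finset.sum_filter _ _).symm
            _ = ∑ p ∈ E.filter (fun p => p.1 = a), wext p := by
                refine Finset.sum_nbij' (fun b => (a, b)) (fun p => p.2) ?_ ?_ ?_ ?_ ?_
                · intro b hb
                  rw [Finset.mem_filter] at hb ⊢
                  exact ⟨hb.2, rfl⟩
                · intro p hp
                  rw [Finset.mem_filter] at hp ⊢
                  have h1 := (hEmem p).mp hp.1
                  refine ⟨h1.2.1, ?_⟩
                  rw [show ((a : X), p.2) = p by rw [← hp.2]]
                  exact hp.1
                · intro b _; rfl
                · intro p hp
                  rw [Finset.mem_filter] at hp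
                  rw [← hp.2]
                · intro b _; rfl
            _ = ∑ p ∈ E, wext p * (if ((⟨a, haA⟩ : ↥A) : X) = p.1 then 1 else 0) := by
                rw [Finset.sum_filter]
                refine Finset.sum_congr rfl (fun p _ => ?_)
                by_cases h : p.1 = a
                · rw [if_pos h, if_pos h.symm, mul_one]
                · rw [if_neg h, if_neg (fun hh => h hh.symm), mul_zero]
        rw [← ENNReal.ofReal_sum_of_nonneg (fun b _ => hwextnn _), key,
          ENNReal.ofReal_toReal (measure_ne_top _ _)]
      · have hz : ∀ b ∈ B, ENNReal.ofReal (wext (a, b)) = 0 := by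
          intro b _
          rw [hwext0 _ (fun hmem => haA ((hEmem (a, b)).mp hmem).1), ENNReal.ofReal_zero]
        rw [Finset.sum_congr rfl hz, Finset.sum_const, smul_zero]
        exact (measure_mono_null (by simpa using haA) hA).symm
    · -- column sums
      intro b
      show ∑ a ∈ A, ENNReal.ofReal (wext (a, b)) = τn {b}
      by_cases hbB : b ∈ B
      · have key : ∑ a ∈ A, wext (a, b) = (τn {b}).toReal := by
          have hcoord := congrFun hLw (Sum.inr ⟨b, hbB⟩)
          have lhs_eq : (L w) (Sum.inr ⟨b, hbB⟩)
              = ∑ p ∈ E, wext p * (if ((⟨b, hbB⟩ : ↥B) : X) = p.2 then 1 else 0) := by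
            show (∑ e : ↥E, w e • vec (e : X × X)) (Sum.inr ⟨b, hbB⟩)
              = ∑ p ∈ E, wext p * (if ((⟨b, hbB⟩ : ↥B) : X) = p.2 then 1 else 0)
            rw [Finset.sum_apply]
            rw [← Finset.sum_coe_sort E
              (fun p => wext p * (if ((⟨b, hbB⟩ : ↥B) : X) = p.2 then 1 else 0))]
            refine Finset.sum_congr rfl (fun e _ => ?_)
            have hwe : wext (e : X × X) = w e := by
              simp only [hwext, dif_pos (e : ↥E).2]
            rw [hwe]
            simp only [Pi.smul_apply, smul_eq_mul, hvec, Pi.add_apply, hvecA, hvecB,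
              Sum.elim_inr, zero_add]
          have rhs_eq : P0 (Sum.inr ⟨b, hbB⟩) = (τn {b}).toReal := by
            simp only [hP0, Sum.elim_inr]
          rw [lhs_eq, rhs_eq] at hcoord
          rw [← hcoord]
          calc ∑ a ∈ A, wext (a, b)
              = ∑ a ∈ A, if (a, b) ∈ E then wext (a, b) else 0 := by
                refine Finset.sum_congr rfl (fun a _ => ?_)
                by_cases h : (a, b) ∈ E
                · rw [if_pos h]
                · rw [if_neg h, hwext0 _ h]
            _ = ∑ a ∈ A.filter (fun a => (a, b) ∈ E), wext (a, b) :=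
                (Finset.sum_filter _ _).symm
            _ = ∑ p ∈ E.filter (fun p => p.2 = b), wext p := by
                refine Finset.sum_nbij' (fun a => (a, b)) (fun p => p.1) ?_ ?_ ?_ ?_ ?_
                · intro a ha
                  rw [Finset.mem_filter] at ha ⊢
                  exact ⟨ha.2, rfl⟩
                · intro p hp
                  rw [Finset.mem_filter] at hp ⊢
                  have h1 := (hEmem p).mp hp.1
                  refine ⟨h1.1, ?_⟩
                  rw [show (p.1, (b : X)) = p by rw [← hp.2]]
                  exact hp.1
                · intro a _; rfl
                · intro p hp
                  rw [Finset.mem_filter] at hp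
                  rw [← hp.2]
                · intro a _; rfl
            _ = ∑ p ∈ E, wext p * (if ((⟨b, hbB⟩ : ↥B) : X) = p.2 then 1 else 0) := by
                rw [Finset.sum_filter]
                refine Finset.sum_congr rfl (fun p _ => ?_)
                by_cases h : p.2 = b
                · rw [if_pos h, if_pos h.symm, mul_one]
                · rw [if_neg h, if_neg (fun hh => h hh.symm), mul_zero]
        rw [← ENNReal.ofReal_sum_of_nonneg (fun a _ => hwextnn _), key,
          ENNReal.ofReal_toReal (measure_ne_top _ _)]
      · have hz : ∀ a ∈ A, ENNReal.ofReal (wext (a, b)) = 0 := by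
          intro a _
          rw [hwext0 _ (fun hmem => hbB ((hEmem (a, b)).mp hmem).2.1), ENNReal.ofReal_zero]
        rw [Finset.sum_congr rfl hz, Finset.sum_const, smul_zero]
        exact (measure_mono_null (by simpa using hbB) hB).symm
  · -- separation
    obtain ⟨f, u, hfM, hfP⟩ := geometric_hahn_banach_closed_point hMconvex hMcompact.isClosed hP
    exfalso
    have hedge : ∀ p ∈ E, f (vec p) < u := by
      intro p hp
      refine hfM _ ⟨Pi.single (⟨p, hp⟩ : ↥E) (1:ℝ), single_mem_stdSimplex ℝ _, ?_⟩
      simp only [hL, LinearMap.coe_mk, AddHom.coe_mk]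
      rw [Finset.sum_eq_single (⟨p, hp⟩ : ↥E)]
      · simp
      · intro e _ hne
        rw [Pi.single_apply, if_neg (fun h => hne (by rw [h])), zero_smul]
      · intro h
        exact absurd (Finset.mem_univ _) h
    have hP0expand : P0 = (∑ a : ↥A, (σn {(a : X)}).toReal • vecA (a : X))
        + ∑ b : ↥B, (τn {(b : X)}).toReal • vecB (b : X) := by
      funext i
      cases i with
      | inl a0 =>
        simp only [hP0, Sum.elim_inl, Pi.add_apply, Finset.sum_apply, Pi.smul_apply,
          hvecA, hvecB, Sum.elim_inl, smul_eq_mul, mul_zero, Finset.sum_const_zero, add_zero]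
        rw [Finset.sum_eq_single a0]
        · simp
        · intro a _ hne
          rw [if_neg (fun h => hne (Subtype.ext h.symm)), mul_zero]
        · intro h
          exact absurd (Finset.mem_univ _) h
      | inr b0 =>
        simp only [hP0, Sum.elim_inr, Pi.add_apply, Finset.sum_apply, Pi.smul_apply,
          hvecA, hvecB, Sum.elim_inr, smul_eq_mul, mul_zero, Finset.sum_const_zero, zero_add]
        rw [Finset.sum_eq_single b0]
        · simp
        · intro b _ hne
          rw [if_neg (fun h => hne (Subtype.ext h.symm)), mul_zero]
        · intro h
          exact absurd (Finset.mem_univ _) h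
    have hfP0 : f P0 = (∑ a ∈ A, (σn {a}).toReal * f (vecA a))
        + ∑ b ∈ B, (τn {b}).toReal * f (vecB b) := by
      rw [hP0expand, map_add, map_sum, map_sum]
      simp only [_root_.map_smul, smul_eq_mul]
      rw [← Finset.sum_coe_sort A (fun a => (σn {a}).toReal * f (vecA a)),
        ← Finset.sum_coe_sort B (fun b => (τn {b}).toReal * f (vecB b))]
    refine discrete_gale_contradiction A B σn τn hA hB r hrev
      (fun x => f (vecA x)) (fun x => f (vecB x)) u ?_ ?_
    · intro a ha b hb hdist
      have := hedge (a, b) ((hEmem (a, b)).mpr ⟨ha, hb, hdist⟩)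
      rwa [hvec, map_add] at this
    · rw [← hfP0]
      exact hfP

end G3B

section G7
variable {X : Type*} [MetricSpace X] [MeasurableSpace X] [BorelSpace X] [CompactSpace X]

lemma wdist_map_le (μ : Measure X) [IsProbabilityMeasure μ] {f : X → X} (hf : Measurable f)
    {ε : ℝ} (hε : 0 ≤ ε) (hd : ∀ x, dist x (f x) ≤ ε) :
    wassersteinInfDist μ (μ.map f) ≤ ε ∧ wassersteinInfDist (μ.map f) μ ≤ ε := by
  haveI := Measure.isProbabilityMeasure_map hf.aemeasurable (μ := μ)
  constructor
  · refine WInf.wdist_le_of_mem_gt (fun r hr => ⟨hε.trans_lt hr, fun U hU => ?_⟩)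
    rw [Measure.map_apply hf isOpen_thickening.measurableSet]
    refine measure_mono (fun x hx => mem_thickening_iff.mpr ⟨x, hx, ?_⟩)
    rw [dist_comm]; exact (hd x).trans_lt hr
  · refine WInf.wdist_le_of_mem_gt (fun r hr => ⟨hε.trans_lt hr, fun U hU => ?_⟩)
    rw [Measure.map_apply hf hU]
    exact measure_mono (fun x hx => mem_thickening_iff.mpr ⟨f x, hx, (hd x).trans_lt hr⟩)

lemma discrete_sum_apply (A B : Finset X) (π : X → X → ℝ≥0∞) (g : X × X → X) {U : Set X}
    (hU : MeasurableSet U) :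
    (∑ p ∈ A ×ˢ B, π p.1 p.2 • Measure.dirac (g p)) U
      = ∑ p ∈ A ×ˢ B, π p.1 p.2 * Set.indicator U 1 (g p) := by
  rw [Measure.finset_sum_apply]
  refine Finset.sum_congr rfl (fun p _ => ?_)
  rw [Measure.smul_apply, smul_eq_mul, Measure.dirac_apply' _ hU]

lemma discrete_endpoint_fst (A B : Finset X) (π : X → X → ℝ≥0∞) (μ : Measure X)
    [IsFiniteMeasure μ] (hA : μ ((A : Set X))ᶜ = 0)
    (hrow : ∀ a, (∑ b ∈ B, π a b) = μ {a}) (g : X × X → X)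
    (hg : ∀ p : X × X, g p = p.1) :
    (∑ p ∈ A ×ˢ B, π p.1 p.2 • Measure.dirac (g p)) = μ := by
  calc ∑ p ∈ A ×ˢ B, π p.1 p.2 • Measure.dirac (g p)
      = ∑ a ∈ A, ∑ b ∈ B, π a b • Measure.dirac a := by
        rw [Finset.sum_product]
        exact Finset.sum_congr rfl (fun a _ => Finset.sum_congr rfl (fun b _ => by rw [hg]))
    _ = ∑ a ∈ A, μ {a} • Measure.dirac a := by
        refine Finset.sum_congr rfl (fun a _ => ?_)
        rw [← Finset.sum_smul, hrow]
    _ = μ := (atomic_repr A μ hA).symm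

lemma discrete_endpoint_snd (A B : Finset X) (π : X → X → ℝ≥0∞) (μ : Measure X)
    [IsFiniteMeasure μ] (hB : μ ((B : Set X))ᶜ = 0)
    (hcol : ∀ b, (∑ a ∈ A, π a b) = μ {b}) (g : X × X → X)
    (hg : ∀ p : X × X, g p = p.2) :
    (∑ p ∈ A ×ˢ B, π p.1 p.2 • Measure.dirac (g p)) = μ := by
  calc ∑ p ∈ A ×ˢ B, π p.1 p.2 • Measure.dirac (g p)
      = ∑ b ∈ B, ∑ a ∈ A, π a b • Measure.dirac b := by
        rw [Finset.sum_product_right]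
        exact Finset.sum_congr rfl (fun b _ => Finset.sum_congr rfl (fun a _ => by rw [hg]))
    _ = ∑ b ∈ B, μ {b} • Measure.dirac b := by
        refine Finset.sum_congr rfl (fun b _ => ?_)
        rw [← Finset.sum_smul, hcol]
    _ = μ := (atomic_repr B μ hB).symm

lemma discrete_prob (A B : Finset X) (π : X → X → ℝ≥0∞) (μ : Measure X)
    [IsProbabilityMeasure μ] (hA : μ ((A : Set X))ᶜ = 0)
    (hrow : ∀ a, (∑ b ∈ B, π a b) = μ {a}) (g : X × X → X) :
    IsProbabilityMeasure (∑ p ∈ A ×ˢ B, π p.1 p.2 • Measure.dirac (g p)) := by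
  constructor
  rw [discrete_sum_apply A B π g MeasurableSet.univ]
  have : ∀ p ∈ A ×ˢ B, π p.1 p.2 * Set.indicator univ 1 (g p) = π p.1 p.2 := by
    intro p _
    rw [Set.indicator_of_mem (mem_univ _)]
    simp
  rw [Finset.sum_congr rfl this, Finset.sum_product]
  calc ∑ a ∈ A, ∑ b ∈ B, π a b = ∑ a ∈ A, μ {a} :=
        Finset.sum_congr rfl (fun a _ => hrow a)
    _ = 1 := sum_atoms_eq_one A μ hA

lemma discrete_geodesic_bound (A B : Finset X) (π : X → X → ℝ≥0∞) {r : ℝ} (hr : 0 < r)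
    (hsupp : ∀ a b, π a b ≠ 0 → dist a b < r) (gs gt : X × X → X) {c : ℝ} (hc : 0 ≤ c)
    (hdist : ∀ p : X × X, π p.1 p.2 ≠ 0 → dist (gs p) (gt p) ≤ c * dist p.1 p.2) :
    wassersteinInfDist (∑ p ∈ A ×ˢ B, π p.1 p.2 • Measure.dirac (gs p))
      (∑ p ∈ A ×ˢ B, π p.1 p.2 • Measure.dirac (gt p)) ≤ c * r := by
  refine WInf.wdist_le_of_mem_gt (fun ρ hρ => ?_)
  have hcr : 0 ≤ c * r := by positivity
  have hρ0 : 0 < ρ := lt_of_le_of_lt hcr hρ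
  refine ⟨hρ0, fun U hU => ?_⟩
  rw [discrete_sum_apply A B π gs hU,
    discrete_sum_apply A B π gt isOpen_thickening.measurableSet]
  refine Finset.sum_le_sum (fun p _ => ?_)
  by_cases hπ : π p.1 p.2 = 0
  · rw [hπ, zero_mul, zero_mul]
  · refine mul_le_mul_right ?_ _
    by_cases hmem : gs p ∈ U
    · have hd : dist (gt p) (gs p) < ρ := by
        rw [dist_comm]
        calc dist (gs p) (gt p) ≤ c * dist p.1 p.2 := hdist p hπ
          _ ≤ c * r := mul_le_mul_of_nonneg_left (hsupp _ _ hπ).le hc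
          _ < ρ := hρ
      rw [Set.indicator_of_mem hmem, Set.indicator_of_mem
        (mem_thickening_iff.mpr ⟨gs p, hmem, hd⟩)]
      simp
    · rw [Set.indicator_of_notMem hmem]
      exact zero_le

end G7

/-- If the compact metric space `(X, ρ)` is strictly intrinsic (any two
points are joined by a shortest path parameterised proportionally to arc length), then the
∞-Wasserstein space over `X` is strictly intrinsic: any two Borel probability measures
`σ, τ` are joined by a path `Γ : [0,1] → P(X)` with
`W_∞(Γ s, Γ t) = |s - t| * W_∞(σ, τ)`. -/
theorem wassersteinInf_strictly_intrinsic
    {X : Type*} [MetricSpace X] [CompactSpace X] [MeasurableSpace X] [BorelSpace X]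
    (hX : ∀ x y : X, ∃ γ : ℝ → X, γ 0 = x ∧ γ 1 = y ∧
      ∀ s ∈ Set.Icc (0 : ℝ) 1, ∀ t ∈ Set.Icc (0 : ℝ) 1,
        dist (γ s) (γ t) = |s - t| * dist x y)
    (σ τ : Measure X) (hσ : IsProbabilityMeasure σ) (hτ : IsProbabilityMeasure τ) :
    ∃ Γ : ℝ → Measure X,
      (∀ t ∈ Set.Icc (0 : ℝ) 1, IsProbabilityMeasure (Γ t)) ∧
      Γ 0 = σ ∧ Γ 1 = τ ∧
      ∀ s ∈ Set.Icc (0 : ℝ) 1, ∀ t ∈ Set.Icc (0 : ℝ) 1,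
        wassersteinInfDist (Γ s) (Γ t) = |s - t| * wassersteinInfDist σ τ := by
  classical
  haveI := hσ; haveI := hτ
  haveI : Nonempty X := by
    by_contra h
    rw [not_nonempty_iff] at h
    have h1 : σ univ = 1 := measure_univ
    rw [Set.univ_eq_empty_iff.mpr h, measure_empty] at h1
    exact zero_ne_one h1
  choose geo hgeo0 hgeo1 hgeod using hX
  set D := wassersteinInfDist σ τ with hD
  have hD0 : 0 ≤ D := WInf.wdist_nonneg σ τ
  set εn : ℕ → ℝ := fun n => 1 / (n + 1) with hεn
  have hεpos : ∀ n, 0 < εn n := fun n => by simp only [hεn]; positivity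
  have hεlim : Tendsto εn atTop (𝓝 0) := tendsto_one_div_add_atTop_nhds_zero_nat
  have hdisc : ∀ n : ℕ, ∃ f : X → X, Measurable f ∧ (Set.range f).Finite ∧
      ∀ x, dist x (f x) < εn n := fun n => exists_discretization _ (hεpos n)
  choose fn hfmeas hfran hfdist using hdisc
  set σs : ℕ → Measure X := fun n => σ.map (fn n) with hσs
  set τs : ℕ → Measure X := fun n => τ.map (fn n) with hτs
  have hσsp : ∀ n, IsProbabilityMeasure (σs n) := fun n => by
    simp only [hσs]; exact Measure.isProbabilityMeasure_map (hfmeas n).aemeasurable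
  have hτsp : ∀ n, IsProbabilityMeasure (τs n) := fun n => by
    simp only [hτs]; exact Measure.isProbabilityMeasure_map (hfmeas n).aemeasurable
  set An : ℕ → Finset X := fun n => (hfran n).toFinset with hAn
  have hAmem : ∀ n x, fn n x ∈ An n := fun n x => by
    simp only [hAn]; exact (hfran n).mem_toFinset.mpr (mem_range_self x)
  have hσsA : ∀ n, σs n (((An n) : Set X))ᶜ = 0 := by
    intro n
    simp only [hσs]
    rw [Measure.map_apply (hfmeas n) (Finset.measurableSet _).compl]
    convert measure_empty (μ := σ)
    exact Set.eq_empty_iff_forall_notMem.mpr (fun x hx => hx (hAmem n x))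
  have hτsA : ∀ n, τs n (((An n) : Set X))ᶜ = 0 := by
    intro n
    simp only [hτs]
    rw [Measure.map_apply (hfmeas n) (Finset.measurableSet _).compl]
    convert measure_empty (μ := τ)
    exact Set.eq_empty_iff_forall_notMem.mpr (fun x hx => hx (hAmem n x))
  have hWσ : ∀ n, wassersteinInfDist σ (σs n) ≤ εn n ∧ wassersteinInfDist (σs n) σ ≤ εn n :=
    fun n => wdist_map_le σ (hfmeas n) (hεpos n).le (fun x => (hfdist n x).le)
  have hWτ : ∀ n, wassersteinInfDist τ (τs n) ≤ εn n ∧ wassersteinInfDist (τs n) τ ≤ εn n :=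
    fun n => wdist_map_le τ (hfmeas n) (hεpos n).le (fun x => (hfdist n x).le)
  have hWn : ∀ n, wassersteinInfDist (σs n) (τs n) ≤ D + 2 * εn n := by
    intro n
    haveI := hσsp n; haveI := hτsp n
    calc wassersteinInfDist (σs n) (τs n)
        ≤ wassersteinInfDist (σs n) σ + wassersteinInfDist σ (τs n) :=
          WInf.wdist_triangle _ _ _
      _ ≤ wassersteinInfDist (σs n) σ
          + (wassersteinInfDist σ τ + wassersteinInfDist τ (τs n)) :=
          add_le_add_right (WInf.wdist_triangle _ _ _) _
      _ ≤ D + 2 * εn n := by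
          have h1 := (hWσ n).2
          have h2 := (hWτ n).1
          rw [← hD]
          linarith
  set rn : ℕ → ℝ := fun n => D + 3 * εn n with hrn
  have hrnpos : ∀ n, 0 < rn n := fun n => by
    simp only [hrn]; have := hεpos n; linarith
  have hmemn : ∀ n, rn n ∈ WInf.wset (σs n) (τs n) := by
    intro n
    haveI := hσsp n; haveI := hτsp n
    refine WInf.mem_wset_of_lt (lt_of_le_of_lt (hWn n) ?_)
    simp only [hrn]
    have := hεpos n
    linarith
  have hstr := fun n => by
    haveI := hσsp n; haveI := hτsp n
    exact finite_strassen (An n) (An n) (σs n) (τs n) (hσsA n) (hτsA n) (hmemn n)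
  choose πn hπsupp hπrow hπcol using hstr
  set Γd : ℕ → ℝ → Measure X := fun n t =>
    ∑ p ∈ (An n) ×ˢ (An n), πn n p.1 p.2 • Measure.dirac (geo p.1 p.2 t) with hΓd
  have hΓd0 : ∀ n, Γd n 0 = σs n := by
    intro n
    simp only [hΓd]
    exact discrete_endpoint_fst _ _ _ _ (hσsA n) (hπrow n)
      (fun p => geo p.1 p.2 0) (fun p => hgeo0 p.1 p.2)
  have hΓd1 : ∀ n, Γd n 1 = τs n := by
    intro n
    simp only [hΓd]
    exact discrete_endpoint_snd _ _ _ _ (hτsA n) (hπcol n)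
      (fun p => geo p.1 p.2 1) (fun p => hgeo1 p.1 p.2)
  have hΓdp : ∀ n t, IsProbabilityMeasure (Γd n t) := by
    intro n t
    simp only [hΓd]
    exact discrete_prob _ _ _ _ (hσsA n) (hπrow n) _
  have hΓdW : ∀ n, ∀ s ∈ Icc (0:ℝ) 1, ∀ t ∈ Icc (0:ℝ) 1,
      wassersteinInfDist (Γd n s) (Γd n t) ≤ |s - t| * rn n := by
    intro n s hs t ht
    simp only [hΓd]
    refine discrete_geodesic_bound _ _ _ (hrnpos n)
      (fun a b h => (hπsupp n a b h).2.2) _ _ (abs_nonneg _) ?_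
    intro p _
    exact (hgeod p.1 p.2 s hs t ht).le
  obtain ⟨𝒰, h𝒰⟩ := Ultrafilter.exists_le (atTop : Filter ℕ)
  set Γm : ℝ → Measure X := fun t => limitMeasure 𝒰 (fun n => Γd n t) (fun n => hΓdp n t)
    with hΓm
  have hΓmp : ∀ t, IsProbabilityMeasure (Γm t) := fun t => by
    simp only [hΓm]; exact limitMeasure_isProbability _ _ _
  set Γ : ℝ → Measure X := fun t => if t = 0 then σ else if t = 1 then τ else Γm t with hΓfun
  have hΓ0 : Γ 0 = σ := by simp [hΓfun]
  have hΓ1 : Γ 1 = τ := by norm_num [hΓfun]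
  have hΓint : ∀ t : ℝ, t ≠ 0 → t ≠ 1 → Γ t = Γm t := by
    intro t h1 h2; simp [hΓfun, h1, h2]
  have hΓprob : ∀ t ∈ Icc (0:ℝ) 1, IsProbabilityMeasure (Γ t) := by
    intro t _
    simp only [hΓfun]
    split_ifs
    exacts [hσ, hτ, hΓmp t]
  have hεlim𝒰 : Tendsto εn (𝒰 : Filter ℕ) (𝓝 0) := hεlim.mono_left h𝒰
  have hrnlim : Tendsto rn (𝒰 : Filter ℕ) (𝓝 D) := by
    have := tendsto_const_nhds (x := D) (f := (𝒰 : Filter ℕ)) |>.add (hεlim𝒰.const_mul 3)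
    simpa only [hrn, mul_zero, add_zero] using this
  have Hconstmu : ∀ (μ : Measure X), ∀ V : Set X, IsOpen V → ∀ c : ℝ≥0∞, c < μ V →
      ∃ K : Set X, IsCompact K ∧ K ⊆ V ∧ c < ulim 𝒰 (fun _ => μ K) := by
    intro μ V hV c hc
    obtain ⟨K, hKV, hKclosed, hcK⟩ :=
      MeasureTheory.Measure.InnerRegularWRT.of_pseudoMetrizableSpace μ hV c hc
    exact ⟨K, hKclosed.isCompact, hKV, by rwa [ulim_const]⟩
  have Hconstnu : ∀ (μ : Measure X), ∀ C : Set X, IsClosed C → ulim 𝒰 (fun _ => μ C) ≤ μ C :=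
    fun μ C _ => le_of_eq (ulim_const _ _)
  have HGmu : ∀ t, ∀ V : Set X, IsOpen V → ∀ c : ℝ≥0∞, c < Γm t V →
      ∃ K : Set X, IsCompact K ∧ K ⊆ V ∧ c < ulim 𝒰 (fun n => Γd n t K) := by
    intro t V hV c hc
    simp only [hΓm] at hc
    exact limitMeasure_open_lt hV hc
  have HGnu : ∀ t, ∀ C : Set X, IsClosed C → ulim 𝒰 (fun n => Γd n t C) ≤ Γm t C := by
    intro t C hC
    simp only [hΓm]
    exact le_limitMeasure_compact hC.isCompact
  -- key upper bound
  have KB : ∀ s ∈ Icc (0:ℝ) 1, ∀ t ∈ Icc (0:ℝ) 1, s ≤ t →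
      wassersteinInfDist (Γ s) (Γ t) ≤ (t - s) * D := by
    intro s hs t ht hst
    rcases eq_or_lt_of_le hst with rfl | hlt
    · haveI := hΓprob s hs
      rw [WInf.wdist_self, sub_self, zero_mul]
    have ht0 : t ≠ 0 := fun h => absurd hs.1 (not_le.mpr (h ▸ hlt))
    by_cases hs0 : s = 0
    · subst hs0
      by_cases ht1 : t = 1
      · subst ht1
        rw [hΓ0, hΓ1, ← hD]
        norm_num
      · rw [hΓ0, hΓint t ht0 ht1, sub_zero]
        haveI := hΓmp t
        refine wdist_le_of_limits 𝒰 (fun _ => σ) (fun n => Γd n t) (fun _ => hσ)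
          (fun n => hΓdp n t) σ (Γm t) (Hconstmu σ) (HGnu t)
          (fun n => εn n + t * rn n) (t * D) (mul_nonneg ht.1 hD0) ?_ ?_
        · have := hεlim𝒰.add (hrnlim.const_mul t)
          simpa only [zero_add] using this
        · intro n
          show wassersteinInfDist σ (Γd n t) ≤ εn n + t * rn n
          haveI := hσsp n; haveI := hΓdp n t
          have h1 : wassersteinInfDist σ (Γd n t) ≤ wassersteinInfDist σ (σs n)
              + wassersteinInfDist (σs n) (Γd n t) := WInf.wdist_triangle _ _ _
          have h2 : wassersteinInfDist (σs n) (Γd n t) ≤ t * rn n := by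
            have hh := hΓdW n 0 ⟨le_refl 0, zero_le_one⟩ t ht
            rw [hΓd0 n, zero_sub, abs_neg, abs_of_nonneg ht.1] at hh
            exact hh
          linarith [(hWσ n).1]
    · have hs1 : s ≠ 1 := by
        intro h
        rw [h] at hlt
        exact absurd ht.2 (not_le.mpr hlt)
      by_cases ht1 : t = 1
      · subst ht1
        rw [hΓ1, hΓint s hs0 hs1]
        haveI := hΓmp s
        refine wdist_le_of_limits 𝒰 (fun n => Γd n s) (fun _ => τ) (fun n => hΓdp n s)
          (fun _ => hτ) (Γm s) τ (HGmu s) (Hconstnu τ)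
          (fun n => (1 - s) * rn n + εn n) ((1 - s) * D)
          (mul_nonneg (by linarith [hs.2]) hD0) ?_ ?_
        · have := (hrnlim.const_mul (1 - s)).add hεlim𝒰
          simpa only [add_zero] using this
        · intro n
          show wassersteinInfDist (Γd n s) τ ≤ (1 - s) * rn n + εn n
          haveI := hτsp n; haveI := hΓdp n s
          have h1 : wassersteinInfDist (Γd n s) τ ≤ wassersteinInfDist (Γd n s) (τs n)
              + wassersteinInfDist (τs n) τ := WInf.wdist_triangle _ _ _
          have h2 : wassersteinInfDist (Γd n s) (τs n) ≤ (1 - s) * rn n := by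
            have hh := hΓdW n s hs 1 ⟨zero_le_one, le_refl 1⟩
            rw [hΓd1 n, abs_of_nonpos (by linarith [hs.2]), neg_sub] at hh
            exact hh
          linarith [(hWτ n).2]
      · rw [hΓint s hs0 hs1, hΓint t ht0 ht1]
        haveI := hΓmp s; haveI := hΓmp t
        refine wdist_le_of_limits 𝒰 (fun n => Γd n s) (fun n => Γd n t) (fun n => hΓdp n s)
          (fun n => hΓdp n t) (Γm s) (Γm t) (HGmu s) (HGnu t)
          (fun n => (t - s) * rn n) ((t - s) * D) (mul_nonneg (by linarith) hD0) ?_ ?_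
        · exact hrnlim.const_mul (t - s)
        · intro n
          show wassersteinInfDist (Γd n s) (Γd n t) ≤ (t - s) * rn n
          have hh := hΓdW n s hs t ht
          rw [abs_of_nonpos (by linarith), neg_sub] at hh
          exact hh
  -- equality
  have KBeq : ∀ s ∈ Icc (0:ℝ) 1, ∀ t ∈ Icc (0:ℝ) 1, s ≤ t →
      wassersteinInfDist (Γ s) (Γ t) = (t - s) * D := by
    intro s hs t ht hst
    refine le_antisymm (KB s hs t ht hst) ?_
    haveI := hΓprob s hs; haveI := hΓprob t ht
    haveI : IsProbabilityMeasure (Γ 0) := by rw [hΓ0]; exact hσ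
    haveI : IsProbabilityMeasure (Γ 1) := by rw [hΓ1]; exact hτ
    have h01 : wassersteinInfDist (Γ 0) (Γ 1) = D := by rw [hΓ0, hΓ1]
    have tri : wassersteinInfDist (Γ 0) (Γ 1) ≤ wassersteinInfDist (Γ 0) (Γ s)
        + (wassersteinInfDist (Γ s) (Γ t) + wassersteinInfDist (Γ t) (Γ 1)) := by
      calc wassersteinInfDist (Γ 0) (Γ 1)
          ≤ wassersteinInfDist (Γ 0) (Γ s) + wassersteinInfDist (Γ s) (Γ 1) :=
            WInf.wdist_triangle _ _ _
        _ ≤ _ := add_le_add_right (WInf.wdist_triangle _ _ _) _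
    have hb1 : wassersteinInfDist (Γ 0) (Γ s) ≤ (s - 0) * D :=
      KB 0 ⟨le_refl 0, zero_le_one⟩ s hs hs.1
    have hb2 : wassersteinInfDist (Γ t) (Γ 1) ≤ (1 - t) * D :=
      KB t ht 1 ⟨zero_le_one, le_refl 1⟩ ht.2
    rw [h01] at tri
    linarith
  refine ⟨Γ, hΓprob, hΓ0, hΓ1, fun s hs t ht => ?_⟩
  rcases le_total s t with h | h
  · rw [KBeq s hs t ht h, abs_sub_comm, abs_of_nonneg (by linarith : (0:ℝ) ≤ t - s)]
  · haveI := hΓprob s hs; haveI := hΓprob t ht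
    rw [WInf.wdist_comm (Γ s) (Γ t), KBeq t ht s hs h,
      abs_of_nonneg (by linarith : (0:ℝ) ≤ s - t)]
end

section
/- Let (X, ρ) be a compact metric space and T : X → X a homeomorphism. Then ρ̄ is lower semicontinuous with respect to weak convergence: if (μᵢ) and (νᵢ) are sequences of T-invariant Borel probability measures on X converging weakly to T-invariant Borel probability measures μ and ν respectively, and K ≥ 0 is such that ρ̄(μᵢ, νᵢ) ≤ K for every i, then ρ̄(μ, ν) ≤ K. -/
open MeasureTheory Filter

/-- A joining of two `T`-invariant Borel probability measures `μ` and `ν`: a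
`(T × T)`-invariant Borel probability measure on `X × X` whose marginals are `μ` and `ν`. -/
def IsJoining {X : Type*} [MeasurableSpace X] (T : X → X)
    (π : Measure (X × X)) (μ ν : Measure X) : Prop :=
  IsProbabilityMeasure π ∧ π.map (Prod.map T T) = π ∧
    π.map Prod.fst = μ ∧ π.map Prod.snd = ν

/-- The Ornstein-type metric `ρ̄(μ, ν) = inf over joinings π of ∫ ρ(x, y) dπ(x, y)`. -/
noncomputable def rhoBar {X : Type*} [MetricSpace X] [MeasurableSpace X] (T : X → X)
    (μ ν : Measure X) : ℝ :=
  sInf {r : ℝ | ∃ π : Measure (X × X), IsJoining T π μ ν ∧ r = ∫ z, dist z.1 z.2 ∂π}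

set_option linter.unusedSectionVars false
set_option linter.unusedVariables false
set_option maxHeartbeats 1000000

open Topology BoundedContinuousFunction Set TopologicalSpace NNReal ENNReal


section LimitFunctional
variable {Y : Type*} [MetricSpace Y] [CompactSpace Y] [MeasurableSpace Y] [BorelSpace Y]

lemma cont_integrable {g : Y → ℝ} (hg : Continuous g) (m : Measure Y) [IsFiniteMeasure m] :
    Integrable g m := by
  exact (BoundedContinuousFunction.mkOfCompact ⟨g, hg⟩).integrable m

lemma cont_bound {g : Y → ℝ} (hg : Continuous g) : ∃ C : ℝ, 0 ≤ C ∧ ∀ y, |g y| ≤ C := by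
  refine ⟨‖BoundedContinuousFunction.mkOfCompact ⟨g, hg⟩‖, norm_nonneg _, fun y => ?_⟩
  simpa using (BoundedContinuousFunction.mkOfCompact ⟨g, hg⟩).norm_coe_le_norm y

variable (U : Ultrafilter ℕ) (πs : ℕ → Measure Y)

/-- the ultrafilter limit of the integrals -/
noncomputable def uLim (g : Y → ℝ) : ℝ := limUnder (U : Filter ℕ) (fun i => ∫ y, g y ∂(πs i))

variable [∀ i, IsProbabilityMeasure (πs i)]

lemma uLim_tendsto {g : Y → ℝ} (hg : Continuous g) :
    Tendsto (fun i => ∫ y, g y ∂(πs i)) U (𝓝 (uLim U πs g)) := by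
  apply tendsto_nhds_limUnder
  obtain ⟨C, hC0, hC⟩ := cont_bound hg
  have hmem : ∀ i, (∫ y, g y ∂(πs i)) ∈ Set.Icc (-C) C := by
    intro i
    have : |∫ y, g y ∂(πs i)| ≤ C := by
      calc |∫ y, g y ∂(πs i)| ≤ ∫ y, |g y| ∂(πs i) := by
            simpa using norm_integral_le_integral_norm (μ := πs i) g
        _ ≤ ∫ _, C ∂(πs i) := integral_mono (cont_integrable hg _).abs
            (integrable_const _) hC
        _ = C := by simp
    exact abs_le.mp this
  have hle : ↑(U.map fun i => ∫ y, g y ∂(πs i)) ≤ 𝓟 (Set.Icc (-C) C) := by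
    rw [Ultrafilter.coe_map, le_principal_iff]
    exact Filter.mem_map.mpr (by filter_upwards with i using hmem i)
  obtain ⟨L, _, hL⟩ := isCompact_Icc.ultrafilter_le_nhds (U.map _) hle
  exact ⟨L, by rwa [Ultrafilter.coe_map] at hL⟩

lemma uLim_add {g h : Y → ℝ} (hg : Continuous g) (hh : Continuous h) :
    uLim U πs (g + h) = uLim U πs g + uLim U πs h := by
  refine tendsto_nhds_unique (uLim_tendsto U πs (hg.add hh)) ?_
  have := (uLim_tendsto U πs hg).add (uLim_tendsto U πs hh)
  refine this.congr fun i => ?_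
  exact (integral_add (cont_integrable hg _) (cont_integrable hh _)).symm

lemma uLim_const (c : ℝ) : uLim U πs (fun _ => c) = c := by
  refine tendsto_nhds_unique (uLim_tendsto U πs continuous_const) ?_
  simpa using tendsto_const_nhds (α := ℕ) (f := (U : Filter ℕ)) (a := c)

lemma uLim_smul (c : ℝ) {g : Y → ℝ} (hg : Continuous g) :
    uLim U πs (fun y => c * g y) = c * uLim U πs g := by
  refine tendsto_nhds_unique (uLim_tendsto U πs (continuous_const.mul hg)) ?_
  have := (uLim_tendsto U πs hg).const_mul c
  refine this.congr fun i => ?_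
  rw [integral_const_mul]

lemma uLim_mono {g h : Y → ℝ} (hg : Continuous g) (hh : Continuous h) (hle : ∀ y, g y ≤ h y) :
    uLim U πs g ≤ uLim U πs h := by
  refine le_of_tendsto_of_tendsto' (uLim_tendsto U πs hg) (uLim_tendsto U πs hh) fun i => ?_
  exact integral_mono (cont_integrable hg _) (cont_integrable hh _) hle

lemma uLim_nonneg {g : Y → ℝ} (hg : Continuous g) (h0 : ∀ y, 0 ≤ g y) : 0 ≤ uLim U πs g := by
  simpa [uLim_const] using uLim_mono U πs continuous_const hg h0

lemma uLim_neg {g : Y → ℝ} (hg : Continuous g) : uLim U πs (fun y => -g y) = -uLim U πs g := by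
  refine tendsto_nhds_unique (uLim_tendsto U πs hg.neg) ?_
  have := (uLim_tendsto U πs hg).neg
  refine this.congr fun i => ?_
  rw [integral_neg]

lemma uLim_sum {n : ℕ} {f : ℕ → Y → ℝ} (hf : ∀ k, Continuous (f k)) :
    uLim U πs (fun y => ∑ k ∈ Finset.range n, f k y) = ∑ k ∈ Finset.range n, uLim U πs (f k) := by
  induction n with
  | zero => simpa using uLim_const U πs 0
  | succ n ih =>
    rw [Finset.sum_range_succ]
    rw [← ih]
    rw [← uLim_add U πs (by fun_prop) (hf n)]
    congr 1
    ext y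
    simp [Finset.sum_range_succ]


lemma clamp_sum (ε : ℝ) (hε : 0 ≤ ε) (t : ℝ) (ht : 0 ≤ t) :
    ∀ n : ℕ, ∑ k ∈ Finset.range n, min (max (t - k * ε) 0) ε = min t (n * ε) := by
  intro n
  induction n with
  | zero => simp [min_eq_right ht]
  | succ n ih =>
    rw [Finset.sum_range_succ, ih]
    push_cast
    rcases le_total t (n * ε) with h | h
    · rw [min_eq_left h, max_eq_right (by linarith), min_eq_left hε,
        min_eq_left (by linarith)]
      ring
    · rw [min_eq_right h, max_eq_left (by linarith)]
      rcases le_total (t - n * ε) ε with h2 | h2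
      · rw [min_eq_left h2, min_eq_left (by linarith)]
        ring
      · rw [min_eq_right h2, min_eq_right (by linarith)]
        ring

lemma nn_cont (f : Y →ᵇ ℝ≥0) : Continuous (fun y => (f y : ℝ)) :=
  NNReal.continuous_coe.comp f.continuous

noncomputable def uLamNN : (Y →ᵇ ℝ≥0) →ₗ[ℝ≥0] ℝ≥0 where
  toFun f := (uLim U πs (fun y => (f y : ℝ))).toNNReal
  map_add' f g := by
    have : (fun y => (((f + g) y : ℝ≥0) : ℝ)) =
        (fun y => (f y : ℝ)) + (fun y => (g y : ℝ)) := by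
      ext y; simp
    rw [this, uLim_add U πs (nn_cont f) (nn_cont g),
      Real.toNNReal_add (uLim_nonneg U πs (nn_cont f) (fun y => (f y).coe_nonneg))
        (uLim_nonneg U πs (nn_cont g) (fun y => (g y).coe_nonneg))]
  map_smul' c f := by
    have : (fun y => (((c • f) y : ℝ≥0) : ℝ)) = fun y => (c : ℝ) * (f y : ℝ) := by
      ext y; simp [NNReal.smul_def]
    rw [this, uLim_smul U πs _ (nn_cont f), Real.toNNReal_mul c.coe_nonneg]
    simp

lemma uLamNN_coe (f : Y →ᵇ ℝ≥0) :
    ((uLamNN U πs f : ℝ≥0) : ℝ) = uLim U πs (fun y => (f y : ℝ)) :=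
  Real.coe_toNNReal _ (uLim_nonneg U πs (nn_cont f) (fun y => (f y).coe_nonneg))

lemma uLamNN_mono {f g : Y →ᵇ ℝ≥0} (h : ∀ y, f y ≤ g y) :
    uLamNN U πs f ≤ uLamNN U πs g := by
  rw [← NNReal.coe_le_coe, uLamNN_coe, uLamNN_coe]
  exact uLim_mono U πs (nn_cont f) (nn_cont g) fun y => NNReal.coe_le_coe.mpr (h y)

lemma uLamNN_one : uLamNN U πs 1 = 1 := by
  have : ((uLamNN U πs 1 : ℝ≥0) : ℝ) = 1 := by
    rw [uLamNN_coe]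
    simpa using uLim_const U πs 1
  exact_mod_cast this

noncomputable def uLamC : CompactlySupportedContinuousMap Y ℝ≥0 →ₗ[ℝ≥0] ℝ≥0 where
  toFun f := uLamNN U πs f.toBoundedContinuousFunction
  map_add' f g := by
    show uLamNN U πs (f + g).toBoundedContinuousFunction =
      uLamNN U πs f.toBoundedContinuousFunction + uLamNN U πs g.toBoundedContinuousFunction
    rw [← map_add]
    congr 1
  map_smul' c f := by
    show uLamNN U πs (c • f).toBoundedContinuousFunction =
      c • uLamNN U πs f.toBoundedContinuousFunction
    rw [← map_smul]
    congr 1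

lemma uLamC_coe (f : CompactlySupportedContinuousMap Y ℝ≥0) :
    ((uLamC U πs f : ℝ≥0) : ℝ) = uLim U πs (fun y => (f y : ℝ)) :=
  uLamNN_coe U πs _

noncomputable def limContent : Content Y where
  toFun := rieszContentAux (uLamC U πs)
  mono' K₁ K₂ h := rieszContentAux_mono _ h
  sup_le' := rieszContentAux_sup_le _
  sup_disjoint' K₁ K₂ hd _ _ := by
    refine le_antisymm (rieszContentAux_sup_le _ K₁ K₂) ?_
    refine le_csInf (rieszContentAux_image_nonempty _ _) ?_
    rintro b ⟨f, hf, rfl⟩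
    obtain ⟨φ, hφ2, hφ1, hφ01⟩ := exists_continuous_zero_one_of_isCompact K₂.isCompact
      K₁.isCompact.isClosed hd.symm
    set g₁ : Y →ᵇ ℝ≥0 := BoundedContinuousFunction.mkOfCompact
      ⟨fun y => f y * (φ y).toNNReal,
        f.continuous.mul (continuous_real_toNNReal.comp φ.continuous)⟩ with hg₁
    set g₂ : Y →ᵇ ℝ≥0 := BoundedContinuousFunction.mkOfCompact
      ⟨fun y => f y * (1 - φ y).toNNReal, f.continuous.mul
        (continuous_real_toNNReal.comp (continuous_const.sub φ.continuous))⟩ with hg₂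
    have hsum : g₁ + g₂ = f := by
      ext y
      have h01 := hφ01 y
      have : (φ y).toNNReal + (1 - φ y).toNNReal = 1 := by
        have h1 : (0:ℝ) ≤ φ y := h01.1
        have h2 : (0:ℝ) ≤ 1 - φ y := by linarith [h01.2]
        apply NNReal.coe_injective
        push_cast [Real.coe_toNNReal _ h1, Real.coe_toNNReal _ h2]
        ring
      simp only [hg₁, hg₂, BoundedContinuousFunction.add_apply,
        BoundedContinuousFunction.mkOfCompact_apply, ContinuousMap.coe_mk]
      rw [← mul_add, this, mul_one]
      rfl
    have h₁ : rieszContentAux (uLamC U πs) K₁ ≤ uLamNN U πs g₁ := by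
      refine (rieszContentAux_le (uLamC U πs)
        (f := CompactlySupportedContinuousMap.continuousMapEquiv g₁.toContinuousMap) ?_).trans
        (le_of_eq rfl)
      intro x hx
      show 1 ≤ g₁ x
      have : φ x = 1 := hφ1 hx
      simp [hg₁, this, hf x (Or.inl hx)]
    have h₂ : rieszContentAux (uLamC U πs) K₂ ≤ uLamNN U πs g₂ := by
      refine (rieszContentAux_le (uLamC U πs)
        (f := CompactlySupportedContinuousMap.continuousMapEquiv g₂.toContinuousMap) ?_).trans
        (le_of_eq rfl)
      intro x hx
      show 1 ≤ g₂ x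
      have : φ x = 0 := hφ2 hx
      simp [hg₂, this, hf x (Or.inr hx)]
    calc rieszContentAux (uLamC U πs) K₁ + rieszContentAux (uLamC U πs) K₂
        ≤ uLamNN U πs g₁ + uLamNN U πs g₂ := add_le_add h₁ h₂
      _ = uLamNN U πs (g₁ + g₂) := (map_add _ _ _).symm
      _ = uLamC U πs f := (congrArg (uLamNN U πs) hsum).trans rfl

noncomputable def limMeasure : Measure Y := (limContent U πs).measure

lemma content_le_limMeasure (K : Compacts Y) :
    ((limContent U πs).toFun K : ℝ≥0∞) ≤ limMeasure U πs K := by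
  rw [limMeasure, Content.measure_apply _ K.isCompact.isClosed.measurableSet]
  exact (limContent U πs).le_outerMeasure_compacts K

lemma limContent_univ : (limContent U πs).toFun ⟨univ, isCompact_univ⟩ = 1 := by
  refine le_antisymm ?_ ?_
  · have := rieszContentAux_le (uLamC U πs) (K := ⟨univ, isCompact_univ⟩)
      (f := CompactlySupportedContinuousMap.continuousMapEquiv 1) (fun x _ => le_refl _)
    have h1 : uLamC U πs (CompactlySupportedContinuousMap.continuousMapEquiv 1) = 1 :=
      uLamNN_one U πs
    simpa [h1, limContent] using this
  · refine le_csInf (rieszContentAux_image_nonempty _ _) ?_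
    rintro b ⟨f, hf, rfl⟩
    calc (1 : ℝ≥0) = uLamNN U πs 1 := (uLamNN_one U πs).symm
      _ ≤ uLamC U πs f := uLamNN_mono U πs fun y => by simpa using hf y trivial

instance limMeasure_prob : IsProbabilityMeasure (limMeasure U πs) := by
  constructor
  refine le_antisymm ?_ ?_
  · rw [limMeasure, Content.measure_apply _ MeasurableSet.univ,
      (limContent U πs).outerMeasure_of_isOpen univ isOpen_univ]
    refine le_trans (Content.innerContent_le _ ⟨univ, isOpen_univ⟩ ⟨univ, isCompact_univ⟩
      subset_rfl) ?_
    rw [show ((limContent U πs) ⟨univ, isCompact_univ⟩ : ℝ≥0∞)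
        = ((limContent U πs).toFun ⟨univ, isCompact_univ⟩ : ℝ≥0∞) from rfl,
      limContent_univ]
    simp
  · have := content_le_limMeasure U πs ⟨univ, isCompact_univ⟩
    rwa [limContent_univ] at this


lemma uLim_le_slice {f : Y → ℝ} (hf : Continuous f) {c d : ℝ}
    (hc : 0 < c) (hd : 0 < d) (hfc : ∀ y, f y ≤ c) :
    uLim U πs f ≤ c * ((limMeasure U πs) {y | d ≤ f y}).toReal + d := by
  set S : Set Y := {y | d ≤ f y} with hS
  have hSclosed : IsClosed S := isClosed_le continuous_const hf
  have hScompact : IsCompact S := hSclosed.isCompact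
  set KS : Compacts Y := ⟨S, hScompact⟩ with hKS
  -- step 1 : uLim f ≤ c * content(S) + d
  have step1 : uLim U πs f ≤ c * ((limContent U πs).toFun KS : ℝ) + d := by
    apply _root_.le_of_forall_pos_le_add
    intro ε hε
    have hε' : (0 : ℝ≥0) < (ε / c).toNNReal := by
      simp [Real.toNNReal_pos]
      positivity
    obtain ⟨h, h1, hΛ⟩ := exists_lt_rieszContentAux_add_pos (uLamC U πs) KS hε'
    have pointwise : ∀ y, f y ≤ c * (h y : ℝ) + d := by
      intro y
      by_cases hy : y ∈ S
      · have h1y : (1 : ℝ) ≤ (h y : ℝ) := by exact_mod_cast h1 y hy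
        nlinarith [hfc y, hd.le]
      · have : f y < d := by simpa [hS] using hy
        have : (0:ℝ) ≤ (h y : ℝ) := (h y).coe_nonneg
        nlinarith
    have : uLim U πs f ≤ c * ((uLamC U πs) h : ℝ) + d := by
      calc uLim U πs f ≤ uLim U πs (fun y => c * (h y : ℝ) + d) :=
            uLim_mono U πs hf (by fun_prop) pointwise
        _ = uLim U πs ((fun y => c * (h y : ℝ)) + fun _ => d) := by rfl
        _ = c * uLim U πs (fun y => (h y : ℝ)) + d := by
            rw [uLim_add U πs (by fun_prop) continuous_const, uLim_smul U πs c (g := fun y => (h y : ℝ)) (NNReal.continuous_coe.comp h.continuous),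
              uLim_const]
        _ = c * ((uLamC U πs) h : ℝ) + d := by rw [uLamC_coe]
    refine this.trans ?_
    have hΛ' : ((uLamC U πs) h : ℝ) ≤ ((limContent U πs).toFun KS : ℝ) + (ε / c) := by
      have := hΛ.le
      have h2 : ((uLamC U πs) h : ℝ) ≤
          ((rieszContentAux (uLamC U πs) KS : ℝ≥0) : ℝ) + ((ε / c).toNNReal : ℝ) := by
        exact_mod_cast this
      refine h2.trans ?_
      have : ((ε / c).toNNReal : ℝ) = ε / c := Real.coe_toNNReal _ (by positivity)
      rw [this]
      rfl
    have := mul_le_mul_of_nonneg_left hΛ' hc.le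
    rw [mul_add] at this
    rw [mul_div_cancel₀ ε (ne_of_gt hc)] at this
    linarith
  -- step 2 : content(S) ≤ measure(S)
  have step2 : (((limContent U πs).toFun KS : ℝ≥0) : ℝ) ≤ ((limMeasure U πs) S).toReal := by
    have h1 := content_le_limMeasure U πs KS
    have hne : (limMeasure U πs) S ≠ ⊤ := measure_ne_top _ _
    have := ENNReal.toReal_mono hne h1
    rwa [ENNReal.coe_toReal] at this
  have := mul_le_mul_of_nonneg_left step2 hc.le
  linarith

lemma uLim_le_integral_of_nonneg {g : Y → ℝ} (hg : Continuous g) (hg0 : ∀ y, 0 ≤ g y) :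
    uLim U πs g ≤ ∫ y, g y ∂(limMeasure U πs) := by
  set π : Measure Y := limMeasure U πs with hπ
  obtain ⟨M, hM0, hM⟩ := cont_bound hg
  apply _root_.le_of_forall_pos_le_add
  intro ε' hε'
  set ε : ℝ := ε' / 2 with hεdef
  have hε : 0 < ε := by positivity
  set n : ℕ := ⌈M / ε⌉₊ + 1 with hn
  have hMn : M ≤ n * ε := by
    have h1 : M / ε ≤ (n : ℝ) := le_trans (Nat.le_ceil _) (by exact_mod_cast Nat.le_succ _)
    calc M = (M / ε) * ε := by field_simp
      _ ≤ n * ε := mul_le_mul_of_nonneg_right h1 hε.le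
  set δ : ℝ := 1 / (n + 1) with hδdef
  have hδ : 0 < δ := by positivity
  have hδ1 : δ ≤ 1 := by
    rw [hδdef]
    rw [div_le_one (by positivity)]
    linarith [Nat.cast_nonneg (α := ℝ) n]
  set f : ℕ → Y → ℝ := fun k y => min (max (g y - k * ε) 0) ε with hf
  have hfc : ∀ k, Continuous (f k) := fun k =>
    ((hg.sub continuous_const).max continuous_const).min continuous_const
  have hsum : ∀ y, ∑ k ∈ Finset.range n, f k y = g y := by
    intro y
    rw [clamp_sum ε hε.le (g y) (hg0 y) n]
    exact min_eq_left ((le_trans (le_abs_self _) (hM y)).trans hMn)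
  set S : ℕ → Set Y := fun k => {y | k * ε + δ * ε ≤ g y} with hSdef
  have hSmeas : ∀ k, MeasurableSet (S k) :=
    fun k => (isClosed_le continuous_const hg).measurableSet
  set a : ℕ → ℝ := fun k => (π (S k)).toReal with ha
  set T : ℕ → Set Y := fun k => {y | (k + 1) * ε ≤ g y} with hTdef
  have hTmeas : ∀ k, MeasurableSet (T k) :=
    fun k => (isClosed_le continuous_const hg).measurableSet
  set b : ℕ → ℝ := fun k => (π (T k)).toReal with hb
  -- upper bound for each slice
  have slice : ∀ k, uLim U πs (f k) ≤ ε * a k + δ * ε := by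
    intro k
    have hset : {y | δ * ε ≤ f k y} = S k := by
      ext y
      simp only [hf, hSdef, Set.mem_setOf_eq]
      constructor
      · intro hy
        have h1 : δ * ε ≤ max (g y - k * ε) 0 := le_trans hy (min_le_left _ _)
        have h2 : (0:ℝ) < δ * ε := by positivity
        have h3 : max (g y - k * ε) 0 = g y - k * ε := by
          rcases max_cases (g y - k * ε) 0 with ⟨h4, _⟩ | ⟨h4, _⟩
          · exact h4
          · linarith [h4 ▸ h1]
        linarith [h3 ▸ h1]
      · intro hy
        have : δ * ε ≤ g y - k * ε := by linarith
        have h1 : δ * ε ≤ max (g y - k * ε) 0 := le_trans this (le_max_left _ _)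
        have h2 : δ * ε ≤ ε := by nlinarith
        exact le_min h1 h2
    have := uLim_le_slice U πs (hfc k) hε (show (0:ℝ) < δ * ε by positivity)
      (fun y => min_le_right _ _)
    rw [hset] at this
    linarith [this]
  -- integral lower bound for each slice
  have islice : ∀ k, ε * b k ≤ ∫ y, f k y ∂π := by
    intro k
    have hpoint : ∀ y, (T k).indicator (fun _ => ε) y ≤ f k y := by
      intro y
      by_cases hy : y ∈ T k
      · rw [Set.indicator_of_mem hy]
        have : (k + 1) * ε ≤ g y := hy
        have h1 : ε ≤ max (g y - k * ε) 0 := le_max_of_le_left (by nlinarith)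
        simp only [hf]
        exact le_min h1 le_rfl
      · rw [Set.indicator_of_notMem hy]
        simp only [hf]
        exact le_min (le_max_right _ _) hε.le
    have hint : ∫ y, (T k).indicator (fun _ => ε) y ∂π = ε * b k := by
      rw [integral_indicator_const ε (hTmeas k)]
      simp [hb, mul_comm, Measure.real]
    rw [← hint]
    exact integral_mono ((integrable_const ε).indicator (hTmeas k))
      (cont_integrable (hfc k) π) hpoint
  -- chaining the sums
  have hsum_a : ∑ k ∈ Finset.range n, a k ≤ 1 + ∑ k ∈ Finset.range n, b k := by
    obtain ⟨m, hm⟩ : ∃ m, n = m + 1 := ⟨⌈M / ε⌉₊, rfl⟩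
    rw [hm, Finset.sum_range_succ']
    have ha0 : a 0 ≤ 1 := by
      rw [ha]
      have := ENNReal.toReal_mono (by simp) (prob_le_one (μ := π) (s := S 0))
      simpa using this
    have hak : ∀ k, a (k + 1) ≤ b k := by
      intro k
      apply ENNReal.toReal_mono (measure_ne_top _ _)
      apply measure_mono
      intro y hy
      simp only [hSdef, Set.mem_setOf_eq] at hy
      simp only [hTdef, Set.mem_setOf_eq]
      push_cast at hy ⊢
      nlinarith
    have h1 : ∑ k ∈ Finset.range m, a (k + 1) ≤ ∑ k ∈ Finset.range m, b k :=
      Finset.sum_le_sum fun k _ => hak k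
    have h2 : ∑ k ∈ Finset.range m, b k ≤ ∑ k ∈ Finset.range (m + 1), b k := by
      rw [Finset.sum_range_succ]
      have : (0:ℝ) ≤ b m := ENNReal.toReal_nonneg
      linarith
    linarith
  -- put everything together
  have huLim : uLim U πs g = ∑ k ∈ Finset.range n, uLim U πs (f k) := by
    rw [← uLim_sum U πs hfc]
    congr 1
    ext y
    rw [hsum y]
  have hint : ∫ y, g y ∂π = ∑ k ∈ Finset.range n, ∫ y, f k y ∂π := by
    rw [← integral_finset_sum _ (fun k _ => cont_integrable (hfc k) π)]
    apply integral_congr_ae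
    filter_upwards with y using (hsum y).symm
  have c1 : uLim U πs g ≤ ε * (∑ k ∈ Finset.range n, a k) + n * (δ * ε) := by
    rw [huLim, Finset.mul_sum]
    calc ∑ k ∈ Finset.range n, uLim U πs (f k)
        ≤ ∑ k ∈ Finset.range n, (ε * a k + δ * ε) := Finset.sum_le_sum fun k _ => slice k
      _ = (∑ k ∈ Finset.range n, ε * a k) + n * (δ * ε) := by
          rw [Finset.sum_add_distrib]
          simp [mul_comm]
  have c2 : ε * (∑ k ∈ Finset.range n, b k) ≤ ∫ y, g y ∂π := by
    rw [hint, Finset.mul_sum]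
    exact Finset.sum_le_sum fun k _ => islice k
  have hnδ : (n : ℝ) * δ ≤ 1 := by
    rw [hδdef]
    rw [mul_one_div, div_le_one (by positivity)]
    linarith
  have : uLim U πs g ≤ ε * (1 + ∑ k ∈ Finset.range n, b k) + n * (δ * ε) :=
    c1.trans (by nlinarith [Finset.sum_nonneg (fun k (_ : k ∈ Finset.range n) =>
      ENNReal.toReal_nonneg (a := π (S k)))])
  have hfinal : uLim U πs g ≤ ∫ y, g y ∂π + 2 * ε := by
    have hc3 : (n:ℝ) * (δ * ε) ≤ ε := by nlinarith
    nlinarith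
  rw [hεdef] at hfinal
  linarith

lemma integral_limMeasure {g : Y → ℝ} (hg : Continuous g) :
    ∫ y, g y ∂(limMeasure U πs) = uLim U πs g := by
  set π : Measure Y := limMeasure U πs with hπ
  have half : ∀ h : Y → ℝ, Continuous h → uLim U πs h ≤ ∫ y, h y ∂π := by
    intro h hh
    obtain ⟨C, hC0, hC⟩ := cont_bound hh
    have hnn : ∀ y, 0 ≤ h y + C := fun y => by
      have := (abs_le.mp (hC y)).1; linarith
    have key := uLim_le_integral_of_nonneg U πs (hh.add continuous_const) hnn
    have e1 : uLim U πs (fun y => h y + C) = uLim U πs h + C := by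
      rw [show (fun y => h y + C) = h + fun _ => C from rfl,
        uLim_add U πs hh continuous_const, uLim_const]
    have e2 : ∫ y, (h y + C) ∂π = (∫ y, h y ∂π) + C := by
      rw [integral_add (cont_integrable hh π) (integrable_const C)]
      simp
    have key' : uLim U πs (fun y => h y + C) ≤ ∫ y, (h y + C) ∂π := key
    rw [e1, e2] at key'
    linarith
  have h1 := half g hg
  have h2 := half (fun y => -g y) hg.neg
  rw [uLim_neg U πs hg, integral_neg] at h2
  linarith

end LimitFunctional


lemma measure_ext_of_integral {Ω : Type*} [MetricSpace Ω] [MeasurableSpace Ω] [BorelSpace Ω]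
    {m₁ m₂ : Measure Ω} [IsFiniteMeasure m₁] [IsFiniteMeasure m₂]
    (h : ∀ g : Ω → ℝ, Continuous g → ∫ x, g x ∂m₁ = ∫ x, g x ∂m₂) : m₁ = m₂ := by
  apply ext_of_forall_lintegral_eq_of_IsFiniteMeasure
  intro f
  have hf : Continuous fun x => (f x : ℝ) := NNReal.continuous_coe.comp f.continuous
  have int1 : Integrable (fun x => (f x : ℝ)) m₁ := integrable_of_nnreal (μ := m₁) f
  have int2 : Integrable (fun x => (f x : ℝ)) m₂ := integrable_of_nnreal (μ := m₂) f
  rw [lintegral_coe_eq_integral _ int1, lintegral_coe_eq_integral _ int2, h _ hf]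

theorem rhoBar_lowerSemicontinuous'
    {X : Type*} [MetricSpace X] [CompactSpace X] [MeasurableSpace X] [BorelSpace X]
    (T : X ≃ₜ X)
    (μs νs : ℕ → Measure X) (μ ν : Measure X)
    (hμsp : ∀ i, IsProbabilityMeasure (μs i)) (hνsp : ∀ i, IsProbabilityMeasure (νs i))
    (hμp : IsProbabilityMeasure μ) (hνp : IsProbabilityMeasure ν)
    (hμsT : ∀ i, (μs i).map T = μs i) (hνsT : ∀ i, (νs i).map T = νs i)
    (hμT : μ.map T = μ) (hνT : ν.map T = ν)
    (hμw : ∀ g : X → ℝ, Continuous g →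
      Tendsto (fun i => ∫ x, g x ∂(μs i)) atTop (nhds (∫ x, g x ∂μ)))
    (hνw : ∀ g : X → ℝ, Continuous g →
      Tendsto (fun i => ∫ x, g x ∂(νs i)) atTop (nhds (∫ x, g x ∂ν)))
    (K : ℝ) (hK : 0 ≤ K) (hbound : ∀ i, rhoBar (⇑T) (μs i) (νs i) ≤ K) :
    rhoBar (⇑T) μ ν ≤ K := by
  classical
  have hTmeas : Measurable (⇑T) := T.continuous.measurable
  -- choose near-optimal joinings
  have hchoice : ∀ i : ℕ, ∃ π : Measure (X × X), IsJoining (⇑T) π (μs i) (νs i) ∧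
      ∫ z, dist z.1 z.2 ∂π ≤ K + 1 / (i + 1) := by
    intro i
    haveI := hμsp i; haveI := hνsp i
    have hprodJ : IsJoining (⇑T) ((μs i).prod (νs i)) (μs i) (νs i) := by
      refine ⟨inferInstance, ?_, by simp, by simp⟩
      rw [← Measure.map_prod_map _ _ hTmeas hTmeas, hμsT i, hνsT i]
    have hne : {r : ℝ | ∃ π : Measure (X × X), IsJoining (⇑T) π (μs i) (νs i) ∧
        r = ∫ z, dist z.1 z.2 ∂π}.Nonempty :=
      ⟨_, (μs i).prod (νs i), hprodJ, rfl⟩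
    obtain ⟨r, hrmem, hrlt⟩ := Real.lt_sInf_add_pos hne
      (show (0:ℝ) < 1 / (i + 1) by positivity)
    obtain ⟨π, hπJ, rfl⟩ := hrmem
    exact ⟨π, hπJ, le_of_lt (lt_of_lt_of_le hrlt (by
      have := hbound i
      rw [rhoBar] at this
      linarith))⟩
  choose πs hjoin hcost using hchoice
  haveI : ∀ i, IsProbabilityMeasure (πs i) := fun i => (hjoin i).1
  set U : Ultrafilter ℕ := Ultrafilter.of atTop with hU
  have hUle : (U : Filter ℕ) ≤ atTop := Ultrafilter.of_le _
  set π : Measure (X × X) := limMeasure U πs with hπdef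
  have htend : ∀ g : X × X → ℝ, Continuous g →
      Tendsto (fun i => ∫ z, g z ∂(πs i)) U (𝓝 (∫ z, g z ∂π)) := by
    intro g hg
    rw [hπdef, integral_limMeasure U πs hg]
    exact uLim_tendsto U πs hg
  haveI hπprob : IsProbabilityMeasure π := limMeasure_prob U πs
  -- marginals
  have hfst : π.map Prod.fst = μ := by
    haveI : IsProbabilityMeasure (π.map (Prod.fst : X × X → X)) :=
      Measure.isProbabilityMeasure_map measurable_fst.aemeasurable
    apply measure_ext_of_integral
    intro g hg
    rw [integral_map measurable_fst.aemeasurable hg.aestronglyMeasurable]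
    have A := htend (fun z => g z.1) (hg.comp continuous_fst)
    have B : ∀ i, ∫ z, g z.1 ∂(πs i) = ∫ x, g x ∂(μs i) := by
      intro i
      rw [← (hjoin i).2.2.1, integral_map measurable_fst.aemeasurable hg.aestronglyMeasurable]
    have C : Tendsto (fun i => ∫ z, g z.1 ∂(πs i)) U (𝓝 (∫ x, g x ∂μ)) := by
      refine Tendsto.congr (fun i => (B i).symm) ?_
      exact (hμw g hg).mono_left hUle
    exact tendsto_nhds_unique A C
  have hsnd : π.map Prod.snd = ν := by
    haveI : IsProbabilityMeasure (π.map (Prod.snd : X × X → X)) :=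
      Measure.isProbabilityMeasure_map measurable_snd.aemeasurable
    apply measure_ext_of_integral
    intro g hg
    rw [integral_map measurable_snd.aemeasurable hg.aestronglyMeasurable]
    have A := htend (fun z => g z.2) (hg.comp continuous_snd)
    have B : ∀ i, ∫ z, g z.2 ∂(πs i) = ∫ x, g x ∂(νs i) := by
      intro i
      rw [← (hjoin i).2.2.2, integral_map measurable_snd.aemeasurable hg.aestronglyMeasurable]
    have C : Tendsto (fun i => ∫ z, g z.2 ∂(πs i)) U (𝓝 (∫ x, g x ∂ν)) := by
      refine Tendsto.congr (fun i => (B i).symm) ?_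
      exact (hνw g hg).mono_left hUle
    exact tendsto_nhds_unique A C
  -- invariance
  have hTTcont : Continuous (Prod.map (⇑T) (⇑T)) := T.continuous.prodMap T.continuous
  have hTTmeas : Measurable (Prod.map (⇑T) (⇑T)) := hTTcont.measurable
  have hinv : π.map (Prod.map (⇑T) (⇑T)) = π := by
    haveI : IsProbabilityMeasure (π.map (Prod.map (⇑T) (⇑T))) :=
      Measure.isProbabilityMeasure_map hTTmeas.aemeasurable
    apply measure_ext_of_integral
    intro g hg
    rw [integral_map hTTmeas.aemeasurable hg.aestronglyMeasurable]
    have A := htend (fun z => g (Prod.map (⇑T) (⇑T) z)) (hg.comp hTTcont)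
    have B : ∀ i, ∫ z, g (Prod.map (⇑T) (⇑T) z) ∂(πs i) = ∫ z, g z ∂(πs i) := by
      intro i
      rw [← integral_map hTTmeas.aemeasurable hg.aestronglyMeasurable, (hjoin i).2.1]
    have C : Tendsto (fun i => ∫ z, g (Prod.map (⇑T) (⇑T) z) ∂(πs i)) U
        (𝓝 (∫ z, g z ∂π)) := by
      refine Tendsto.congr (fun i => (B i).symm) ?_
      exact htend g hg
    exact tendsto_nhds_unique A C
  -- cost bound
  have hdistcont : Continuous (fun z : X × X => dist z.1 z.2) :=
    continuous_fst.dist continuous_snd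
  have hcostπ : ∫ z, dist z.1 z.2 ∂π ≤ K := by
    refine le_of_tendsto_of_tendsto' (htend _ hdistcont) ?_ hcost
    have : Tendsto (fun i : ℕ => K + 1 / ((i : ℝ) + 1)) atTop (𝓝 (K + 0)) :=
      tendsto_const_nhds.add tendsto_one_div_add_atTop_nhds_zero_nat
    rw [add_zero] at this
    exact this.mono_left hUle
  -- conclusion
  have hbdd : BddBelow {r : ℝ | ∃ π : Measure (X × X), IsJoining (⇑T) π μ ν ∧
      r = ∫ z, dist z.1 z.2 ∂π} := by
    refine ⟨0, ?_⟩
    rintro r ⟨π', _, rfl⟩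
    exact integral_nonneg fun z => dist_nonneg
  have hmem : (∫ z, dist z.1 z.2 ∂π) ∈ {r : ℝ | ∃ π : Measure (X × X),
      IsJoining (⇑T) π μ ν ∧ r = ∫ z, dist z.1 z.2 ∂π} :=
    ⟨π, ⟨hπprob, hinv, hfst, hsnd⟩, rfl⟩
  exact le_trans (csInf_le hbdd hmem) hcostπ

/-- For a homeomorphism `T` of a compact metric space, `ρ̄` is lower
semicontinuous with respect to weak convergence: if `T`-invariant probability measures
`μᵢ → μ` and `νᵢ → ν` weakly and `ρ̄(μᵢ, νᵢ) ≤ K` for every `i`, then `ρ̄(μ, ν) ≤ K`. -/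
theorem rhoBar_lowerSemicontinuous
    {X : Type*} [MetricSpace X] [CompactSpace X] [MeasurableSpace X] [BorelSpace X]
    (T : X ≃ₜ X)
    (μs νs : ℕ → Measure X) (μ ν : Measure X)
    (hμsp : ∀ i, IsProbabilityMeasure (μs i)) (hνsp : ∀ i, IsProbabilityMeasure (νs i))
    (hμp : IsProbabilityMeasure μ) (hνp : IsProbabilityMeasure ν)
    (hμsT : ∀ i, (μs i).map T = μs i) (hνsT : ∀ i, (νs i).map T = νs i)
    (hμT : μ.map T = μ) (hνT : ν.map T = ν)
    (hμw : ∀ g : X → ℝ, Continuous g →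
      Tendsto (fun i => ∫ x, g x ∂(μs i)) atTop (nhds (∫ x, g x ∂μ)))
    (hνw : ∀ g : X → ℝ, Continuous g →
      Tendsto (fun i => ∫ x, g x ∂(νs i)) atTop (nhds (∫ x, g x ∂ν)))
    (K : ℝ) (hK : 0 ≤ K) (hbound : ∀ i, rhoBar (⇑T) (μs i) (νs i) ≤ K) :
    rhoBar (⇑T) μ ν ≤ K := by
  exact rhoBar_lowerSemicontinuous' T μs νs μ ν hμsp hνsp hμp hνp hμsT hνsT hμT hνT hμw hνw K hK hbound
end

section
/- Let (X, d_X) and (Y, d_Y) be nonempty compact metric spaces. Suppose that for every ε > 0 there exist maps f : Y → X and g : X → Y such that |d_X(f(a), f(b)) − d_Y(a, b)| ≤ ε for all a, b ∈ Y, and d_X(f(g(x)), x) ≤ ε for all x ∈ X. Then X and Y are isometric: there exists a bijective isometry (isometric equivalence) between X and Y. -/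
open GromovHausdorff

/-- If two nonempty compact metric spaces `X` and `Y` admit, for every
`ε > 0`, an `ε`-isometric map `f : Y → X` with an `ε`-inverse `g : X → Y`, then `X` and `Y`
are isometric. -/
theorem isometric_of_approx_isometries
    {X Y : Type*} [MetricSpace X] [CompactSpace X] [Nonempty X]
    [MetricSpace Y] [CompactSpace Y] [Nonempty Y]
    (h : ∀ ε : ℝ, 0 < ε → ∃ f : Y → X, ∃ g : X → Y,
      (∀ a b : Y, |dist (f a) (f b) - dist a b| ≤ ε) ∧
      (∀ x : X, dist (f (g x)) x ≤ ε)) :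
    Nonempty (X ≃ᵢ Y) := by
  have key : ghDist Y X ≤ 0 := by
    refine le_of_forall_pos_le_add fun δ δ0 => ?_
    obtain ⟨f, g, hf, hg⟩ := h (δ / 2) (by linarith)
    have : ghDist Y X ≤ 0 + (δ / 2) / 2 + δ / 2 := by
      refine ghDist_le_of_approx_subsets (s := (Set.univ : Set Y))
        (fun y => f y) (fun y => ⟨y, Set.mem_univ y, by simp⟩)
        (fun x => ⟨⟨g x, Set.mem_univ _⟩, by simpa [dist_comm] using hg x⟩)
        (fun a b => ?_)
      have := hf a b
      rw [abs_sub_comm] at this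
      simpa [Subtype.dist_eq] using this
    linarith
  have h0 : ghDist Y X = 0 := le_antisymm key dist_nonneg
  have heq : toGHSpace Y = toGHSpace X := by
    have : dist (toGHSpace Y) (toGHSpace X) = 0 := h0
    exact eq_of_dist_eq_zero this
  exact ⟨((toGHSpace_eq_toGHSpace_iff_isometryEquiv.1 heq).some).symm⟩
end
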